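/- arXiv:2311.12462 — 10 statements merged into one kernel-verified Lean document; each statement's English description precedes it below -/
import Mathlib

section
/- Let S be a numerical semigroup generated by a nonempty set M of positive integers. Then 2m - 1 ∈ S for all m ∈ M if and only if 2s - 1 ∈ S for all nonzero s ∈ S. -/
/-! The set of `s` with `s = 0` or `2 * s - 1 ∈ S` contains the generators and is closed under
addition, because `2 * (a + b) - 1 = (2 * a - 1) + 2 * b` for `a ≠ 0`. -/

lemma double_add_sub_one_mem {S : AddSubmonoid ℕ} {a b : ℕ} (ha : a ≠ 0)
    (ha' : 2 * a - 1 ∈ S) (hb : b ∈ S) : 2 * (a + b) - 1 ∈ S := by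
  have hsplit : 2 * (a + b) - 1 = (2 * a - 1) + (b + b) := by omega
  rw [hsplit]
  exact S.add_mem ha' (S.add_mem hb hb)

lemma double_sub_one_mem_closure {M : Set ℕ} (hM : ∀ m ∈ M, 2 * m - 1 ∈ AddSubmonoid.closure M)
    {s : ℕ} (hs : s ∈ AddSubmonoid.closure M) (hs0 : s ≠ 0) :
    2 * s - 1 ∈ AddSubmonoid.closure M := by
  suffices h : s = 0 ∨ 2 * s - 1 ∈ AddSubmonoid.closure M from h.resolve_left hs0
  clear hs0
  induction hs using AddSubmonoid.closure_induction with
  | mem m hm => exact .inr (hM m hm)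
  | zero => exact .inl rfl
  | add a b _ hb iha ihb =>
    rcases eq_or_ne a 0 with rfl | ha
    · simpa using ihb
    · exact .inr (double_add_sub_one_mem ha (iha.resolve_left ha) hb)

theorem double_sub_one_mem_iff_general (M : Set ℕ) (hpos : ∀ m ∈ M, 0 < m) :
    (∀ m ∈ M, 2 * m - 1 ∈ AddSubmonoid.closure M) ↔
      (∀ s ∈ AddSubmonoid.closure M, s ≠ 0 → 2 * s - 1 ∈ AddSubmonoid.closure M) :=
  ⟨fun h _ hs hs0 => double_sub_one_mem_closure h hs hs0,
    fun h m hm => h m (AddSubmonoid.subset_closure hm) (hpos m hm).ne'⟩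

theorem double_sub_one_mem_iff (M : Set ℕ) (hM : M.Nonempty) (hpos : ∀ m ∈ M, 0 < m) :
    (∀ m ∈ M, 2 * m - 1 ∈ AddSubmonoid.closure M) ↔
      (∀ s ∈ AddSubmonoid.closure M, s ≠ 0 → 2 * s - 1 ∈ AddSubmonoid.closure M) :=
  double_sub_one_mem_iff_general M hpos
end

section
/- Let n > 2, and let k be odd with 2^r < k < 2^{r+1} and k < 2^n. Then the Proth numerical semigroup P_k(n) = ⟨{k·2^{n+i} + 1 : i ∈ ℕ}⟩ is generated by the finite set {k·2^{n+i} + 1 : 0 ≤ i ≤ n + r}. -/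
/-!
For `i = n + r + u + 1` the generator `k·2^(n+i) + 1` equals `A + k·2^n·Q` with
`A = 1 + k·2^(n+u)` and `Q = 2^u·(2^(n+r+1) - 1)`. Any `Q` is a sum of exactly `A` powers of two
with exponents at most `E` as soon as `Q / 2^E + E ≤ A ≤ Q`: start from the binary expansion
of `Q mod 2^E` together with `Q / 2^E` copies of `2^E`, then split powers `2^(x+1) = 2^x + 2^x`
until there are `A` summands. Since `2^r < k < 2^(r+1)` both bounds hold for `E = n + r`, and
each summand `2^x` contributes the generator `k·2^(n+x) + 1`.
-/

/-- `(a, q)` lies in `countedTwoPowSums E` iff `q` is a sum of exactly `a` powers `2^x`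
with `x ≤ E`. -/
def countedTwoPowSums (E : ℕ) : AddSubmonoid (ℕ × ℕ) :=
  AddSubmonoid.closure {p | ∃ x ≤ E, p = (1, 2 ^ x)}

lemma countedTwoPowSums_mono : Monotone countedTwoPowSums := by
  intro E F hEF
  apply AddSubmonoid.closure_mono
  rintro _ ⟨x, hx, rfl⟩
  exact ⟨x, hx.trans hEF, rfl⟩

lemma one_two_pow_mem_countedTwoPowSums {x E : ℕ} (hx : x ≤ E) :
    ((1, 2 ^ x) : ℕ × ℕ) ∈ countedTwoPowSums E :=
  AddSubmonoid.subset_closure ⟨x, hx, rfl⟩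

lemma exists_mem_countedTwoPowSums_of_lt_two_pow {E q : ℕ} (hq : q < 2 ^ E) :
    ∃ a ≤ E, (a, q) ∈ countedTwoPowSums E := by
  induction E generalizing q with
  | zero =>
    obtain rfl : q = 0 := by simpa using hq
    exact ⟨0, le_rfl, zero_mem _⟩
  | succ E ih =>
    have hmono := countedTwoPowSums_mono (Nat.le_succ E)
    by_cases hqE : q < 2 ^ E
    · obtain ⟨a, haE, ha⟩ := ih hqE
      exact ⟨a, haE.trans (Nat.le_succ E), hmono ha⟩
    · obtain ⟨a, haE, ha⟩ := ih (q := q - 2 ^ E) (by rw [pow_succ] at hq; omega)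
      refine ⟨a + 1, by omega, ?_⟩
      have hsum := add_mem (hmono ha) (one_two_pow_mem_countedTwoPowSums (Nat.le_succ E))
      rwa [Prod.mk_add_mk, Nat.sub_add_cancel (by omega)] at hsum

lemma add_one_zero_mem_countedTwoPowSums {E : ℕ} {p : ℕ × ℕ} (hp : p ∈ countedTwoPowSums E)
    (hlt : p.1 < p.2) : p + (1, 0) ∈ countedTwoPowSums E := by
  induction hp using AddSubmonoid.closure_induction with
  | mem p hp =>
    obtain ⟨x, hxE, rfl⟩ := hp
    obtain ⟨y, rfl⟩ : ∃ y, x = y + 1 := Nat.exists_eq_add_one_of_ne_zero (by simpa using hlt)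
    have hy := one_two_pow_mem_countedTwoPowSums (E := E) (x := y) (by omega)
    convert add_mem hy hy using 1
    simp [pow_succ, mul_two]
  | zero => simp at hlt
  | add p p' hp hp' ih ih' =>
    rcases lt_or_ge p.1 p.2 with hlt₁ | hge₁
    · rw [add_right_comm]
      exact add_mem (ih hlt₁) hp'
    · have hlt₂ : p'.1 < p'.2 := by simp only [Prod.fst_add, Prod.snd_add] at hlt; omega
      rw [add_assoc]
      exact add_mem hp (ih' hlt₂)

lemma mem_countedTwoPowSums_of_le_of_le {E a b q : ℕ} (h : (a, q) ∈ countedTwoPowSums E)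
    (hab : a ≤ b) (hbq : b ≤ q) : (b, q) ∈ countedTwoPowSums E := by
  induction b, hab using Nat.le_induction with
  | base => exact h
  | succ b _ ih => exact add_one_zero_mem_countedTwoPowSums (ih (by omega)) hbq

lemma mem_countedTwoPowSums_of_div_add_le {E a q : ℕ} (hlow : q / 2 ^ E + E ≤ a)
    (hup : a ≤ q) : (a, q) ∈ countedTwoPowSums E := by
  obtain ⟨b, hbE, hb⟩ :=
    exists_mem_countedTwoPowSums_of_lt_two_pow (Nat.mod_lt q (Nat.two_pow_pos E))
  have htop : (q / 2 ^ E) • ((1, 2 ^ E) : ℕ × ℕ) ∈ countedTwoPowSums E :=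
    nsmul_mem (one_two_pow_mem_countedTwoPowSums le_rfl) _
  have hbin := add_mem htop hb
  rw [Prod.smul_mk, Prod.mk_add_mk, smul_eq_mul, smul_eq_mul, mul_one, mul_comm,
    Nat.div_add_mod] at hbin
  exact mem_countedTwoPowSums_of_le_of_le hbin (by omega) hup

lemma add_mul_mem_closure_of_mem_countedTwoPowSums (c : ℕ) {E a q : ℕ}
    (h : (a, q) ∈ countedTwoPowSums E) :
    a + c * q ∈ AddSubmonoid.closure {m : ℕ | ∃ x ≤ E, m = c * 2 ^ x + 1} := by
  let φ : ℕ × ℕ →+ ℕ := AddMonoidHom.fst ℕ ℕ + c • AddMonoidHom.snd ℕ ℕ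
  have hφ : φ (a, q) ∈ (countedTwoPowSums E).map φ := AddSubmonoid.mem_map_of_mem φ h
  rw [countedTwoPowSums, AddMonoidHom.map_mclosure] at hφ
  refine AddSubmonoid.closure_mono ?_ hφ
  rintro _ ⟨_, ⟨x, hx, rfl⟩, rfl⟩
  exact ⟨x, hx, by simp [φ, add_comm]⟩

lemma three_le_of_two_pow_lt_of_lt_two_pow_succ {k r : ℕ} (hr1 : 2 ^ r < k)
    (hr2 : k < 2 ^ (r + 1)) : 3 ≤ k := by
  rcases r with _ | r
  · omega
  · have : 2 ≤ 2 ^ (r + 1) := Nat.le_self_pow (by omega) 2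
    omega

lemma exists_mem_countedTwoPowSums_of_two_pow_lt_of_lt_two_pow_succ {n k r : ℕ} (hn : 1 ≤ n)
    (hr1 : 2 ^ r < k) (hr2 : k < 2 ^ (r + 1)) (u : ℕ) :
    ∃ Q, Q + 2 ^ u = 2 ^ (n + u) * 2 ^ (r + 1) ∧
      (1 + k * 2 ^ (n + u), Q) ∈ countedTwoPowSums (n + r) := by
  have hk := three_le_of_two_pow_lt_of_lt_two_pow_succ hr1 hr2
  have hXu : 2 ^ (u + 1) ≤ 2 ^ (n + u) := Nat.pow_le_pow_right two_pos (by omega)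
  obtain ⟨Q, hQ⟩ : ∃ Q, Q + 2 ^ u = 2 ^ (n + u) * 2 ^ (r + 1) :=
    ⟨_, Nat.sub_add_cancel ((Nat.pow_le_pow_right two_pos (by omega : u ≤ n + u)).trans
      (Nat.le_mul_of_pos_right _ (Nat.two_pow_pos _)))⟩
  refine ⟨Q, hQ, mem_countedTwoPowSums_of_div_add_le ?_ ?_⟩
  · have hQlt : Q / 2 ^ (n + r) < 2 ^ (u + 1) := by
      apply Nat.div_lt_of_lt_mul
      have : 2 ^ (n + r) * 2 ^ (u + 1) = 2 ^ (n + u) * 2 ^ (r + 1) := by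
        rw [← pow_add, ← pow_add]; ring_nf
      have := Nat.two_pow_pos u
      omega
    have hXn : n < 2 ^ (n + u) :=
      Nat.lt_two_pow_self.trans_le (Nat.pow_le_pow_right two_pos (by omega))
    have hrk : r < k := Nat.lt_two_pow_self.trans hr1
    nlinarith
  · have := Nat.mul_le_mul_right (2 ^ (n + u)) hr2
    rw [pow_succ] at hXu
    nlinarith [Nat.one_le_two_pow (n := u)]

lemma proth_generator_mem_closure {n k r : ℕ} (hn : 1 ≤ n) (hr1 : 2 ^ r < k)
    (hr2 : k < 2 ^ (r + 1)) (u : ℕ) :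
    k * 2 ^ (n + (n + r + u + 1)) + 1 ∈
      AddSubmonoid.closure {m : ℕ | ∃ i ≤ n + r, m = k * 2 ^ (n + i) + 1} := by
  obtain ⟨Q, hQ, hmem⟩ :=
    exists_mem_countedTwoPowSums_of_two_pow_lt_of_lt_two_pow_succ hn hr1 hr2 u
  have hval : 1 + k * 2 ^ (n + u) + k * 2 ^ n * Q = k * 2 ^ (n + (n + r + u + 1)) + 1 := by
    have : 2 ^ (n + (n + r + u + 1)) = 2 ^ n * (2 ^ (n + u) * 2 ^ (r + 1)) := by
      rw [← pow_add, ← pow_add]; ring_nf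
    rw [this, ← hQ, pow_add]
    ring
  have hgen := add_mul_mem_closure_of_mem_countedTwoPowSums (k * 2 ^ n) hmem
  simp_rw [mul_assoc, ← pow_add] at hgen
  rwa [← mul_assoc, hval] at hgen

theorem proth_finitely_generated_general (n k r : ℕ) (hn : 2 < n)
    (hr1 : 2 ^ r < k) (hr2 : k < 2 ^ (r + 1)) :
    AddSubmonoid.closure {m : ℕ | ∃ i : ℕ, m = k * 2 ^ (n + i) + 1} =
      AddSubmonoid.closure {m : ℕ | ∃ i : ℕ, i ≤ n + r ∧ m = k * 2 ^ (n + i) + 1} := by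
  refine le_antisymm (AddSubmonoid.closure_le.mpr ?_) (AddSubmonoid.closure_mono ?_)
  · rintro _ ⟨i, rfl⟩
    rcases le_or_gt i (n + r) with hi | hi
    · exact AddSubmonoid.subset_closure ⟨i, hi, rfl⟩
    · obtain ⟨u, rfl⟩ := Nat.exists_eq_add_of_lt hi
      exact proth_generator_mem_closure (by omega) hr1 hr2 u
  · rintro _ ⟨i, -, rfl⟩
    exact ⟨i, rfl⟩

theorem proth_finitely_generated (n k r : ℕ) (hn : 2 < n) (hk : Odd k)
    (hklt : k < 2 ^ n) (hr1 : 2 ^ r < k) (hr2 : k < 2 ^ (r + 1)) :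
    AddSubmonoid.closure {m : ℕ | ∃ i : ℕ, m = k * 2 ^ (n + i) + 1} =
      AddSubmonoid.closure {m : ℕ | ∃ i : ℕ, i ≤ n + r ∧ m = k * 2 ^ (n + i) + 1} :=
  proth_finitely_generated_general n k r hn hr1 hr2
end

section
/- Let n > 2, and k odd with 2^r < k < 2^{r+1} and k < 2^n. Then the element k·2^{2n+r} + 1 does not belong to the submonoid of ℕ generated by {k·2^{n+i} + 1 : 0 ≤ i ≤ n + r - 1}. -/
/-!
Every generator `k * 2 ^ (n + i) + 1` is at least `q + 1` and congruent to `1` modulo `q`,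
where `q = k * 2 ^ n`. A sum of `s` generators is therefore `≡ s [MOD q]` and at least
`s * (q + 1)`. The target is `≡ 1 [MOD q]` and is not itself a generator, so it would need
`s ≥ 2` summands with `s ≡ 1 [MOD q]`, i.e. `s ≥ q + 1`, making it at least `(q + 1) ^ 2`.
Since `2 ^ r < k`, the target `k * 2 ^ (2 * n + r) + 1` is smaller than that.
-/

theorem List.sum_modEq_length {q : ℕ} :
    ∀ {l : List ℕ}, (∀ y ∈ l, y ≡ 1 [MOD q]) → l.sum ≡ l.length [MOD q]
  | [], _ => rfl
  | y :: l, h => by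
    rw [List.sum_cons, List.length_cons, add_comm l.length]
    exact (h y List.mem_cons_self).add
      (List.sum_modEq_length fun z hz => h z (List.mem_cons_of_mem y hz))

theorem Nat.succ_le_of_modEq_one {q a : ℕ} (ha : a ≡ 1 [MOD q]) (h2 : 2 ≤ a) : q + 1 ≤ a := by
  have hdvd : q ∣ a - 1 := (Nat.modEq_iff_dvd' (by omega)).mp ha.symm
  have := Nat.le_of_dvd (by omega) hdvd
  omega

theorem Nat.notMem_addSubmonoidClosure_of_modEq_one {S : Set ℕ} {q x : ℕ}
    (hS : ∀ y ∈ S, q + 1 ≤ y ∧ y ≡ 1 [MOD q]) (hx0 : x ≠ 0) (hxS : x ∉ S)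
    (hx : x ≡ 1 [MOD q]) (hlt : x < (q + 1) ^ 2) :
    x ∉ AddSubmonoid.closure S := by
  intro hmem
  obtain ⟨l, hlS, rfl⟩ := AddSubmonoid.exists_list_of_mem_closure hmem
  have hlen_modEq : l.length ≡ 1 [MOD q] :=
    (List.sum_modEq_length fun y hy => (hS y (hlS y hy)).2).symm.trans hx
  have hlen_le : l.length * (q + 1) ≤ l.sum := by
    simpa using List.card_nsmul_le_sum l (q + 1) fun y hy => (hS y (hlS y hy)).1
  obtain hlen | hlen | hlen : l.length = 0 ∨ l.length = 1 ∨ 2 ≤ l.length := by omega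
  · exact hx0 (by simp [List.length_eq_zero_iff.mp hlen])
  · obtain ⟨y, rfl⟩ := List.length_eq_one_iff.mp hlen
    exact hxS (by simpa using hlS y (by simp))
  · have := Nat.mul_le_mul_right (q + 1) (Nat.succ_le_of_modEq_one hlen_modEq hlen)
    rw [← sq] at this
    omega

theorem mul_two_pow_add_one_lt_sq {k n r : ℕ} (hr : 2 ^ r < k) :
    k * 2 ^ (2 * n + r) + 1 < (k * 2 ^ n + 1) ^ 2 := by
  have hk : 0 < k := Nat.zero_lt_of_lt hr
  calc k * 2 ^ (2 * n + r) + 1 = 2 ^ n * 2 ^ n * (k * 2 ^ r) + 1 := by ring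
    _ < 2 ^ n * 2 ^ n * (k * k) + 1 := by gcongr
    _ ≤ 2 ^ n * 2 ^ n * (k * k) + 2 * (k * 2 ^ n) + 1 := by omega
    _ = (k * 2 ^ n + 1) ^ 2 := by ring

theorem last_generator_not_in_general (n k r : ℕ) (hr1 : 2 ^ r < k) :
    k * 2 ^ (2 * n + r) + 1 ∉
      AddSubmonoid.closure {m : ℕ | ∃ i : ℕ, i < n + r ∧ m = k * 2 ^ (n + i) + 1} := by
  have hk : 0 < k := Nat.zero_lt_of_lt hr1
  have hdvd (j : ℕ) : k * 2 ^ n ∣ k * 2 ^ (n + j) :=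
    mul_dvd_mul_left k (pow_dvd_pow 2 (Nat.le_add_right n j))
  refine Nat.notMem_addSubmonoidClosure_of_modEq_one ?_ (by omega) ?_ ?_
    (mul_two_pow_add_one_lt_sq hr1)
  · rintro _ ⟨i, -, rfl⟩
    refine ⟨?_, Nat.modEq_zero_iff_dvd.mpr (hdvd i) |>.add_right 1⟩
    have := Nat.mul_le_mul_left k (Nat.pow_le_pow_right two_pos (Nat.le_add_right n i))
    omega
  · rintro ⟨i, hi, heq⟩
    have hpow : 2 ^ (2 * n + r) = 2 ^ (n + i) := Nat.eq_of_mul_eq_mul_left hk (by omega)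
    have := Nat.pow_right_injective le_rfl hpow
    omega
  · have := Nat.modEq_zero_iff_dvd.mpr (hdvd (n + r)) |>.add_right 1
    rwa [← add_assoc, ← two_mul] at this

theorem last_generator_not_in (n k r : ℕ) (hn : 2 < n) (hk : Odd k)
    (hklt : k < 2 ^ n) (hr1 : 2 ^ r < k) (hr2 : k < 2 ^ (r + 1)) :
    k * 2 ^ (2 * n + r) + 1 ∉
      AddSubmonoid.closure {m : ℕ | ∃ i : ℕ, i < n + r ∧ m = k * 2 ^ (n + i) + 1} :=
  last_generator_not_in_general n k r hr1
end

section
/- Let n > 2, and k odd with 2^r < k < 2^{r+1} and k < 2^n. Then {k·2^{n+i} + 1 : 0 ≤ i ≤ n + r} is the minimal generating set of P_k(n); in particular the embedding dimension of P_k(n) equals n + r + 1. -/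
/-!
Put `K = k·2ⁿ` and `F = n + r`, so that `2^F + F ≤ K ≤ 2^(F+1) - 2`. A sum of `t` generators
`K·2^e + 1` is `K·S + t` with `S = ∑ 2^e ≥ t`.

Minimality: if `K·2^i + 1 = K·S + t` with `2^i < K`, then `S = 2^i` forces `t = 1` and the
single exponent is `i`; `S > 2^i` makes the right side too large, and `S < 2^i` forces
`t ≥ K + 1 > S`.

Generation: `K·2^j + 1 = K·(2^j - c) + (1 + K·c)`, so it suffices to split `2^j - c` into
exactly `1 + K·c` powers of two at most `2^F`. Starting from the base-`2^F` expansion (at most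
`S / 2^F + F` parts) and halving parts one at a time, every count between that and `S` is
reached, and a suitable `c` exists by the bounds on `K`.
-/

theorem AddSubmonoid.mem_closure_image_iff_exists_multiset {α M : Type*} [AddCommMonoid M]
    {f : α → M} {s : Set α} {x : M} :
    x ∈ AddSubmonoid.closure (f '' s) ↔
      ∃ es : Multiset α, (∀ a ∈ es, a ∈ s) ∧ (es.map f).sum = x := by
  constructor
  · intro hx
    induction hx using AddSubmonoid.closure_induction with
    | mem x hx =>
      obtain ⟨a, ha, rfl⟩ := hx
      exact ⟨{a}, by simpa using ha, by simp⟩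
    | zero => exact ⟨0, by simp, by simp⟩
    | add x y _ _ hx hy =>
      obtain ⟨es, hes, rfl⟩ := hx
      obtain ⟨fs, hfs, rfl⟩ := hy
      refine ⟨es + fs, fun a ha => ?_, by simp⟩
      exact (Multiset.mem_add.mp ha).elim (hes a) (hfs a)
  · rintro ⟨es, hes, rfl⟩
    refine AddSubmonoid.multiset_sum_mem _ _ fun y hy => ?_
    obtain ⟨a, ha, rfl⟩ := Multiset.mem_map.mp hy
    exact AddSubmonoid.subset_closure (Set.mem_image_of_mem f (hes a ha))

theorem Multiset.card_le_sum_map_two_pow (es : Multiset ℕ) :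
    card es ≤ (es.map (2 ^ ·)).sum := by
  simpa using Multiset.sum_map_le_sum_map (fun _ => 1) (2 ^ ·) fun _ _ => Nat.one_le_two_pow

theorem Multiset.sum_map_mul_two_pow_add_one (K : ℕ) (es : Multiset ℕ) :
    (es.map (K * 2 ^ · + 1)).sum = K * (es.map (2 ^ ·)).sum + card es := by
  simp [Multiset.sum_map_add, Multiset.sum_map_mul_left]

theorem exists_two_pow_partition_card_succ {F : ℕ} {es : Multiset ℕ} (hF : ∀ e ∈ es, e ≤ F)
    (hcard : Multiset.card es < (es.map (2 ^ ·)).sum) :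
    ∃ es' : Multiset ℕ, (∀ e ∈ es', e ≤ F) ∧ Multiset.card es' = Multiset.card es + 1 ∧
      (es'.map (2 ^ ·)).sum = (es.map (2 ^ ·)).sum := by
  obtain ⟨e, he, he0⟩ : ∃ e ∈ es, 0 < e := by
    by_contra! h
    have : es.map (2 ^ ·) = es.map fun _ => 1 :=
      Multiset.map_congr rfl fun e he' => by simp [Nat.le_zero.mp (h e he')]
    simp [this] at hcard
  refine ⟨(e - 1) ::ₘ (e - 1) ::ₘ es.erase e, ?_, ?_, ?_⟩
  · intro x hx
    simp only [Multiset.mem_cons] at hx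
    rcases hx with rfl | rfl | hx
    · exact (Nat.sub_le e 1).trans (hF e he)
    · exact (Nat.sub_le e 1).trans (hF e he)
    · exact hF x (Multiset.mem_of_mem_erase hx)
  · simp only [Multiset.card_cons, Multiset.card_erase_of_mem he, Nat.pred_eq_sub_one,
      Nat.add_right_cancel_iff]
    have := Multiset.card_pos_iff_exists_mem.mpr ⟨e, he⟩
    omega
  · conv_rhs => rw [← Multiset.cons_erase he]
    obtain ⟨d, rfl⟩ := Nat.exists_eq_add_of_lt he0
    simp only [zero_add, add_tsub_cancel_right, Multiset.map_cons, Multiset.sum_cons, pow_succ]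
    ring

theorem exists_two_pow_partition_of_card_le {F t : ℕ} {es : Multiset ℕ} (hF : ∀ e ∈ es, e ≤ F)
    (h1 : Multiset.card es ≤ t) (h2 : t ≤ (es.map (2 ^ ·)).sum) :
    ∃ es' : Multiset ℕ, (∀ e ∈ es', e ≤ F) ∧ Multiset.card es' = t ∧
      (es'.map (2 ^ ·)).sum = (es.map (2 ^ ·)).sum := by
  induction t, h1 using Nat.le_induction with
  | base => exact ⟨es, hF, rfl, rfl⟩
  | succ t _ ih =>
    obtain ⟨es₁, hF₁, hcard₁, hsum₁⟩ := ih (by omega)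
    obtain ⟨es₂, hF₂, hcard₂, hsum₂⟩ :=
      exists_two_pow_partition_card_succ hF₁ (by omega)
    exact ⟨es₂, hF₂, by omega, hsum₂.trans hsum₁⟩

theorem exists_two_pow_partition {F t S : ℕ} (hlo : S / 2 ^ F + F ≤ t) (hhi : t ≤ S) :
    ∃ es : Multiset ℕ, (∀ e ∈ es, e ≤ F) ∧ Multiset.card es = t ∧
      (es.map (2 ^ ·)).sum = S := by
  set bits := (S % 2 ^ F).bitIndices
  have hbits : ∀ e ∈ bits, e < F := fun e he =>
    (Nat.pow_lt_pow_iff_right (by norm_num)).mp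
      ((Nat.two_pow_le_of_mem_bitIndices he).trans_lt (Nat.mod_lt _ (by positivity)))
  have hlen : bits.length ≤ F := by
    rw [← List.toFinset_card_of_nodup Nat.bitIndices_nodup]
    exact (Finset.card_le_card fun e he => Finset.mem_range.mpr
      (hbits e (List.mem_toFinset.mp he))).trans (Finset.card_range F).le
  set es₀ := Multiset.replicate (S / 2 ^ F) F + bits
  have hsum₀ : (es₀.map (2 ^ ·)).sum = S := by
    simp [es₀, bits, Nat.div_add_mod']
  have hcard₀ : Multiset.card es₀ ≤ S / 2 ^ F + F := by
    simpa [es₀] using hlen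
  have hF₀ : ∀ e ∈ es₀, e ≤ F := by
    simp only [es₀, Multiset.mem_add, Multiset.mem_replicate, Multiset.mem_coe]
    rintro e (⟨-, rfl⟩ | he)
    exacts [le_rfl, (hbits e he).le]
  obtain ⟨es, hF, hcard, hsum⟩ := exists_two_pow_partition_of_card_le (t := t) (es := es₀)
    hF₀ (by omega) (by omega)
  exact ⟨es, hF, hcard, hsum.trans hsum₀⟩

theorem mul_two_pow_add_one_mem_closure {K F : ℕ} (hKlo : 2 ^ F + F ≤ K)
    (hKhi : K + 2 ≤ 2 ^ (F + 1)) (j : ℕ) :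
    K * 2 ^ j + 1 ∈ AddSubmonoid.closure ((K * 2 ^ · + 1) '' Set.Iic F) := by
  rcases le_or_gt j F with hj | hj
  · exact AddSubmonoid.subset_closure ⟨j, hj, rfl⟩
  rw [pow_succ] at hKhi
  have hP : 2 ^ F * 2 ≤ 2 ^ j := by rw [← pow_succ]; exact Nat.pow_le_pow_right two_pos hj
  have hE : 4 ≤ 2 ^ F := by
    have : 2 ≤ F := by
      by_contra! h
      interval_cases F <;> omega
    simpa using Nat.pow_le_pow_right two_pos this
  set E := 2 ^ F
  set P := 2 ^ j
  -- the witness is `c = q + 1`, with `q = ⌊2^j / 4^F⌋`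
  set q := P / E / E
  have hqE : q * E ≤ P / E := Nat.div_mul_le_self _ _
  have hPE : P / E * E ≤ P := Nat.div_mul_le_self _ _
  have hPE' : P / E < E * (q + 1) := Nat.lt_mul_div_succ _ (by omega)
  have hlo : (P - (q + 1)) / E + F ≤ 1 + K * (q + 1) := by
    have := Nat.div_le_div_right (c := E) (Nat.sub_le P (q + 1))
    nlinarith
  have hhi : 1 + K * (q + 1) ≤ P - (q + 1) := by
    rcases Nat.eq_zero_or_pos q with hq | hq
    · simp only [hq, zero_add, mul_one]
      omega
    · have hPq : q * E * E ≤ P := (Nat.mul_le_mul_right E hqE).trans hPE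
      have h3 : (K + 2) * (q + 1) ≤ E * 2 * (q + 1) := Nat.mul_le_mul_right _ hKhi
      have h4 : 4 * E * q ≤ E * E * q := Nat.mul_le_mul_right _ (Nat.mul_le_mul_right _ hE)
      have : K * (q + 1) + (q + 1) + 1 ≤ P := by nlinarith
      omega
  obtain ⟨es, hF, hcard, hsum⟩ := exists_two_pow_partition hlo hhi
  refine AddSubmonoid.mem_closure_image_iff_exists_multiset.mpr ⟨es, hF, ?_⟩
  rw [Multiset.sum_map_mul_two_pow_add_one, hsum, hcard]
  have hc : q + 1 ≤ P := by omega
  zify [hc]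
  ring

theorem mul_two_pow_add_one_notMem_closure {K i : ℕ} {s : Set ℕ} (hK : 2 ^ i < K) (hi : i ∉ s) :
    K * 2 ^ i + 1 ∉ AddSubmonoid.closure ((K * 2 ^ · + 1) '' s) := by
  rw [AddSubmonoid.mem_closure_image_iff_exists_multiset]
  rintro ⟨es, hes, hsum⟩
  rw [Multiset.sum_map_mul_two_pow_add_one] at hsum
  have hcard := Multiset.card_le_sum_map_two_pow es
  set S := (es.map (2 ^ ·)).sum
  obtain hS | hS | hS := lt_trichotomy S (2 ^ i)
  · nlinarith
  · obtain ⟨e, rfl⟩ : ∃ e, es = {e} := Multiset.card_eq_one.mp (by rw [hS] at hsum; omega)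
    have hei : e = i := Nat.pow_right_injective le_rfl (by simpa [S] using hS)
    exact hi (hei ▸ hes e (Multiset.mem_singleton_self e))
  · have h : K * (2 ^ i + 1) ≤ K * S := Nat.mul_le_mul_left K hS
    rw [mul_add_one] at h
    have : 1 ≤ 2 ^ i := Nat.one_le_two_pow
    omega

theorem closure_mul_two_pow_add_one_image_Iic {K F : ℕ} (hKlo : 2 ^ F + F ≤ K)
    (hKhi : K + 2 ≤ 2 ^ (F + 1)) :
    AddSubmonoid.closure ((K * 2 ^ · + 1) '' Set.Iic F) =
      AddSubmonoid.closure (Set.range (K * 2 ^ · + 1)) :=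
  le_antisymm (AddSubmonoid.closure_mono (Set.image_subset_range _ _))
    (AddSubmonoid.closure_le.mpr (Set.range_subset_iff.mpr
      (mul_two_pow_add_one_mem_closure hKlo hKhi)))

theorem closure_ne_closure_image_Iic_of_ssubset {K F : ℕ} (hK : 2 ^ F < K) {B : Set ℕ}
    (hB : B ⊂ (K * 2 ^ · + 1) '' Set.Iic F) :
    AddSubmonoid.closure B ≠ AddSubmonoid.closure ((K * 2 ^ · + 1) '' Set.Iic F) := by
  intro hBeq
  obtain ⟨_, ⟨i, hi, rfl⟩, hiB⟩ := Set.exists_of_ssubset hB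
  set s := Set.Iic F ∩ (K * 2 ^ · + 1) ⁻¹' B
  have hBs : B ⊆ (K * 2 ^ · + 1) '' s := by
    rw [Set.image_inter_preimage]
    exact Set.subset_inter hB.1 le_rfl
  have hiK : 2 ^ i < K := (Nat.pow_le_pow_right two_pos hi).trans_lt hK
  refine mul_two_pow_add_one_notMem_closure hiK (fun h : i ∈ s => hiB h.2) ?_
  refine AddSubmonoid.closure_mono hBs ?_
  rw [hBeq]
  exact AddSubmonoid.subset_closure ⟨i, hi, rfl⟩

theorem strictMono_mul_two_pow_add_one {K : ℕ} (hK : 0 < K) : StrictMono (K * 2 ^ · + 1) :=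
  ((pow_right_strictMono₀ one_lt_two).const_mul hK).add_const 1

theorem two_pow_add_add_le_mul_two_pow {n k r : ℕ} (hrn : r < n) (hr1 : 2 ^ r < k) :
    2 ^ (n + r) + (n + r) ≤ k * 2 ^ n := by
  have h2n : 2 ^ (n - 1) * 2 = 2 ^ n := Nat.two_pow_pred_mul_two (by omega)
  have : n - 1 < 2 ^ (n - 1) := Nat.lt_two_pow_self
  have hle : (2 ^ r + 1) * 2 ^ n ≤ k * 2 ^ n := Nat.mul_le_mul_right _ hr1
  rw [add_one_mul, ← pow_add, add_comm r] at hle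
  omega

theorem mul_two_pow_add_two_le_two_pow {n k r : ℕ} (hn : 0 < n) (hr2 : k < 2 ^ (r + 1)) :
    k * 2 ^ n + 2 ≤ 2 ^ (n + r + 1) := by
  have hle : (k + 1) * 2 ^ n ≤ 2 ^ (r + 1) * 2 ^ n := Nat.mul_le_mul_right _ hr2
  have : 2 ≤ 2 ^ n := Nat.le_self_pow hn.ne' 2
  rw [add_one_mul, ← pow_add, show r + 1 + n = n + r + 1 by omega] at hle
  omega

theorem proth_embedding_dimension_general (n k r : ℕ)
    (hklt : k < 2 ^ n) (hr1 : 2 ^ r < k) (hr2 : k < 2 ^ (r + 1)) :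
    AddSubmonoid.closure
        (↑((Finset.range (n + r + 1)).image (fun i => k * 2 ^ (n + i) + 1)) : Set ℕ) =
      AddSubmonoid.closure {m : ℕ | ∃ i : ℕ, m = k * 2 ^ (n + i) + 1} ∧
    (∀ B : Set ℕ,
        B ⊂ ↑((Finset.range (n + r + 1)).image (fun i => k * 2 ^ (n + i) + 1)) →
        AddSubmonoid.closure B ≠
          AddSubmonoid.closure {m : ℕ | ∃ i : ℕ, m = k * 2 ^ (n + i) + 1}) ∧
    ((Finset.range (n + r + 1)).image (fun i => k * 2 ^ (n + i) + 1)).card = n + r + 1 := by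
  have hrn : r < n := (Nat.pow_lt_pow_iff_right one_lt_two).mp (hr1.trans hklt)
  have hKlo : 2 ^ (n + r) + (n + r) ≤ k * 2 ^ n := two_pow_add_add_le_mul_two_pow hrn hr1
  have hKhi : k * 2 ^ n + 2 ≤ 2 ^ (n + r + 1) := mul_two_pow_add_two_le_two_pow (by omega) hr2
  have hgen : (fun i => k * 2 ^ (n + i) + 1) = (k * 2 ^ n * 2 ^ · + 1) :=
    funext fun i => by rw [pow_add, mul_assoc]
  have hA : (↑((Finset.range (n + r + 1)).image (k * 2 ^ n * 2 ^ · + 1)) : Set ℕ) =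
      (k * 2 ^ n * 2 ^ · + 1) '' Set.Iic (n + r) := by
    rw [Finset.coe_image, Finset.coe_range, ← Order.Iio_succ]
    rfl
  have hP : {m : ℕ | ∃ i : ℕ, m = k * 2 ^ (n + i) + 1} =
      Set.range (k * 2 ^ n * 2 ^ · + 1) := by
    rw [← hgen]
    exact Set.ext fun m => exists_congr fun i => eq_comm
  have hspan := closure_mul_two_pow_add_one_image_Iic hKlo hKhi
  rw [hP, hgen, hA, ← hspan]
  refine ⟨rfl, fun B hB => closure_ne_closure_image_Iic_of_ssubset (by omega) hB, ?_⟩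
  rw [Finset.card_image_of_injective _ (strictMono_mul_two_pow_add_one (by omega)).injective,
    Finset.card_range]

theorem proth_embedding_dimension (n k r : ℕ) (hn : 2 < n) (hk : Odd k)
    (hklt : k < 2 ^ n) (hr1 : 2 ^ r < k) (hr2 : k < 2 ^ (r + 1)) :
    AddSubmonoid.closure
        (↑((Finset.range (n + r + 1)).image (fun i => k * 2 ^ (n + i) + 1)) : Set ℕ) =
      AddSubmonoid.closure {m : ℕ | ∃ i : ℕ, m = k * 2 ^ (n + i) + 1} ∧
    (∀ B : Set ℕ,
        B ⊂ ↑((Finset.range (n + r + 1)).image (fun i => k * 2 ^ (n + i) + 1)) →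
        AddSubmonoid.closure B ≠
          AddSubmonoid.closure {m : ℕ | ∃ i : ℕ, m = k * 2 ^ (n + i) + 1}) ∧
    ((Finset.range (n + r + 1)).image (fun i => k * 2 ^ (n + i) + 1)).card = n + r + 1 :=
  proth_embedding_dimension_general n k r hklt hr1 hr2
end

section
/- Let n > 2, k = 2^r + 1 with r ≥ 1, s_i = k·2^{n+i} + 1, and let P_k(n) be the Proth numerical semigroup. Every element s of the Apéry set Ap(P_k(n), s_0) can be written as s = a_1·s_1 + ⋯ + a_{n+r}·s_{n+r} for some tuple (a_1,…,a_{n+r}) with each a_i ∈ {0,1,2} and such that a_j = 2 implies a_i = 0 for all i < j. -/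
/-!
Put `K = (2 ^ r + 1) * 2 ^ n`, so that `s_i = K * 2 ^ i + 1`. A sum of `m` generators is
`K * M + m` with `M` a sum of `m` powers of two, and such an `M` exists iff
`popcount M ≤ m ≤ M`. If `s = K * M + m` lies in the Apéry set, then
`s - s_0 = K * (M - 1) + (m - 1)` is not in the semigroup, which forces `m ≤ popcount (M - 1)`.
For the decomposition with the least `M`, the identity
`K * M + m = K * (M - 2 ^ a) + (m + K * 2 ^ a)` rules out `M ≥ 2 ^ (n + r + 1)`.
Finally, for `M = 2 ^ v * (2 * w + 1)` the bounds say `m = popcount M + d` with `d < v`, and the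
digits sought are those of the binary expansion of `M` with `2 ^ v` split `d` times.
-/

open Finset

def popcount (n : ℕ) : ℕ := n.bitIndices.length

@[simp] lemma popcount_zero : popcount 0 = 0 := by simp [popcount]

@[simp] lemma popcount_two_mul (n : ℕ) : popcount (2 * n) = popcount n := by simp [popcount]

@[simp] lemma popcount_two_mul_add_one (n : ℕ) : popcount (2 * n + 1) = popcount n + 1 := by
  simp [popcount]

@[simp] lemma popcount_two_pow_mul (k n : ℕ) : popcount (2 ^ k * n) = popcount n := by
  simp [popcount]

@[simp] lemma popcount_two_pow (k : ℕ) : popcount (2 ^ k) = 1 := by simp [popcount]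

lemma popcount_le_of_lt_two_pow {n t : ℕ} (h : n < 2 ^ t) : popcount n ≤ t := by
  have hsub : n.bitIndices.toFinset ⊆ range t := fun i hi => by
    rw [List.mem_toFinset] at hi
    exact mem_range.2 <| (Nat.pow_lt_pow_iff_right one_lt_two).1 <|
      (Nat.two_pow_le_of_mem_bitIndices hi).trans_lt h
  simpa [popcount, List.toFinset_card_of_nodup Nat.bitIndices_nodup] using card_le_card hsub

lemma popcount_add_two_pow_le (n e : ℕ) : popcount (n + 2 ^ e) ≤ popcount n + 1 := by
  induction n using Nat.evenOddRec generalizing e with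
  | h0 => simp
  | h_even n ih =>
    cases e with
    | zero => simp
    | succ e => simpa [pow_succ', ← mul_add] using ih e
  | h_odd n ih =>
    cases e with
    | zero =>
      rw [show 2 * n + 1 + 2 ^ 0 = 2 * (n + 2 ^ 0) by ring, popcount_two_mul,
        popcount_two_mul_add_one]
      exact (ih 0).trans (by omega)
    | succ e =>
      simpa [show 2 * n + 1 + 2 ^ (e + 1) = 2 * (n + 2 ^ e) + 1 by ring] using ih e

lemma popcount_two_pow_mul_odd_sub_one (v w : ℕ) :
    popcount (2 ^ v * (2 * w + 1) - 1) = popcount w + v := by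
  induction v with
  | zero => simp
  | succ v ih =>
    have hpos : 0 < 2 ^ v * (2 * w + 1) := by positivity
    rw [show 2 ^ (v + 1) * (2 * w + 1) - 1 = 2 * (2 ^ v * (2 * w + 1) - 1) + 1 by
      rw [pow_succ, mul_comm _ 2, mul_assoc]; omega, popcount_two_mul_add_one, ih, add_assoc]

lemma popcount_sum_two_pow_le (E : Multiset ℕ) :
    popcount (E.map (2 ^ ·)).sum ≤ Multiset.card E := by
  induction E using Multiset.induction_on with
  | empty => simp
  | cons e E ih =>
    rw [Multiset.map_cons, Multiset.sum_cons, Multiset.card_cons, add_comm]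
    exact (popcount_add_two_pow_le _ e).trans (by omega)

lemma card_le_sum_two_pow (E : Multiset ℕ) : Multiset.card E ≤ (E.map (2 ^ ·)).sum := by
  have := Multiset.card_nsmul_le_sum (s := E.map (2 ^ ·)) (a := 1) (by simp [Nat.one_le_two_pow])
  rwa [Multiset.card_map, nsmul_one, Nat.cast_id] at this

lemma exists_card_eq_sum_two_pow {M m : ℕ} (hpm : popcount M ≤ m) (hmM : m ≤ M) :
    ∃ E : Multiset ℕ, Multiset.card E = m ∧ (E.map (2 ^ ·)).sum = M := by
  induction m, hpm using Nat.le_induction with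
  | base => exact ⟨M.bitIndices, by simp [popcount], by simp⟩
  | succ m _ ih =>
    obtain ⟨E, hcard, hsum⟩ := ih (by omega)
    -- split one summand `2 ^ (e + 1)` into `2 ^ e + 2 ^ e`
    obtain ⟨e, he, he0⟩ : ∃ e ∈ E, e ≠ 0 := by
      by_contra! h
      have : E.map (2 ^ ·) = E.map (fun _ => 1) :=
        Multiset.map_congr rfl fun e he => by simp [h e he]
      simp [this] at hsum
      omega
    obtain ⟨E, rfl⟩ := Multiset.exists_cons_of_mem he
    obtain ⟨e, rfl⟩ := Nat.exists_eq_succ_of_ne_zero he0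
    refine ⟨e ::ₘ e ::ₘ E, by simp at hcard ⊢; omega, ?_⟩
    rw [← hsum]
    simp [pow_succ]
    ring

def prothSemigroup (K : ℕ) : AddSubmonoid ℕ :=
  AddSubmonoid.closure {x | ∃ i : ℕ, x = K * 2 ^ i + 1}

lemma sum_map_mul_two_pow_add_one (K : ℕ) (E : Multiset ℕ) :
    (E.map (fun i => K * 2 ^ i + 1)).sum = K * (E.map (2 ^ ·)).sum + Multiset.card E := by
  induction E using Multiset.induction_on with
  | empty => simp
  | cons e E ih => simp only [Multiset.map_cons, Multiset.sum_cons, Multiset.card_cons, ih]; ring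

lemma mem_prothSemigroup_iff_exists_multiset {K s : ℕ} :
    s ∈ prothSemigroup K ↔
      ∃ E : Multiset ℕ, s = K * (E.map (2 ^ ·)).sum + Multiset.card E := by
  simp_rw [← sum_map_mul_two_pow_add_one]
  constructor
  · intro hs
    induction hs using AddSubmonoid.closure_induction with
    | mem x hx => obtain ⟨i, rfl⟩ := hx; exact ⟨{i}, by simp⟩
    | zero => exact ⟨0, by simp⟩
    | add x y _ _ hx hy =>
      obtain ⟨E, rfl⟩ := hx
      obtain ⟨F, rfl⟩ := hy
      exact ⟨E + F, by simp⟩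
  · rintro ⟨E, rfl⟩
    refine AddSubmonoid.multiset_sum_mem _ _ fun x hx => ?_
    obtain ⟨i, -, rfl⟩ := Multiset.mem_map.1 hx
    exact AddSubmonoid.subset_closure ⟨i, rfl⟩

lemma mem_prothSemigroup_iff {K s : ℕ} :
    s ∈ prothSemigroup K ↔ ∃ M m, s = K * M + m ∧ popcount M ≤ m ∧ m ≤ M := by
  rw [mem_prothSemigroup_iff_exists_multiset]
  constructor
  · rintro ⟨E, rfl⟩
    exact ⟨_, _, rfl, popcount_sum_two_pow_le E, card_le_sum_two_pow E⟩
  · rintro ⟨M, m, rfl, hpm, hmM⟩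
    obtain ⟨E, rfl, rfl⟩ := exists_card_eq_sum_two_pow hpm hmM
    exact ⟨E, rfl⟩

lemma le_popcount_sub_one_of_forall_ne_add {K s M m : ℕ}
    (hap : ∀ t ∈ prothSemigroup K, s ≠ t + (K + 1)) (hs : s = K * M + m) (hmM : m ≤ M) :
    m ≤ popcount (M - 1) := by
  by_contra! h
  refine hap (K * (M - 1) + (m - 1))
    (mem_prothSemigroup_iff.2 ⟨M - 1, m - 1, rfl, by omega, by omega⟩) ?_
  obtain ⟨m, rfl⟩ : ∃ m', m = m' + 1 := ⟨m - 1, by omega⟩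
  obtain ⟨M, rfl⟩ : ∃ M', M = M' + 1 := ⟨M - 1, by omega⟩
  rw [hs, Nat.add_sub_cancel, Nat.add_sub_cancel]
  ring

lemma exists_decomp_lt_of_two_pow_le {K N M m : ℕ} (hK : N + 2 ≤ K)
    (hKN : K + N + 3 ≤ 2 ^ (N + 1)) (hM : 2 ^ (N + 1) ≤ M) (hm : m ≤ popcount (M - 1)) :
    ∃ M' < M, ∃ m', K * M' + m' = K * M + m ∧ popcount M' ≤ m' ∧ m' ≤ M' := by
  have hM0 : M ≠ 0 := (Nat.two_pow_pos _).trans_le hM |>.ne'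
  set L := Nat.log 2 M
  have hLM : 2 ^ L ≤ M := Nat.pow_log_le_self 2 hM0
  have hML : M < 2 ^ (L + 1) := Nat.lt_pow_succ_log_self one_lt_two M
  obtain ⟨a, hL⟩ : ∃ a, L = N + 1 + a := by
    have := (Nat.pow_lt_pow_iff_right one_lt_two).1 (hM.trans_lt hML)
    exact ⟨L - (N + 1), by omega⟩
  -- the top bit `2 ^ L` of `M` leaves room to move `K * 2 ^ a` from `K * M` to `m`
  have hpa : 0 < 2 ^ a := Nat.two_pow_pos a
  have hpc : ∀ x < 2 ^ (L + 1), popcount x ≤ N + 2 + a := fun x hx =>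
    (popcount_le_of_lt_two_pow hx).trans (by omega)
  have hlin : N + 2 + a ≤ (N + 2) * 2 ^ a := by
    have := Nat.lt_two_pow_self (n := a)
    nlinarith
  have hKa : (N + 2) * 2 ^ a ≤ K * 2 ^ a := Nat.mul_le_mul_right _ hK
  have hLa : (K + N + 3) * 2 ^ a ≤ 2 ^ L := by
    rw [hL, pow_add]
    exact Nat.mul_le_mul_right _ hKN
  have ham : 2 ^ a ≤ M := (Nat.pow_le_pow_right two_pos (by omega)).trans hLM
  refine ⟨M - 2 ^ a, by omega, m + K * 2 ^ a, ?_, ?_, ?_⟩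
  · zify [ham]
    ring
  · exact (hpc _ (by omega)).trans (by omega)
  · have := hpc (M - 1) (by omega)
    have : m + K * 2 ^ a + 2 ^ a ≤ M := by nlinarith
    omega

lemma exists_decomp_lt_two_pow {K N s : ℕ} (hK : N + 2 ≤ K) (hKN : K + N + 3 ≤ 2 ^ (N + 1))
    (hs : s ∈ prothSemigroup K) (hap : ∀ t ∈ prothSemigroup K, s ≠ t + (K + 1)) :
    ∃ M m, s = K * M + m ∧ popcount M ≤ m ∧ m ≤ popcount (M - 1) ∧ M < 2 ^ (N + 1) := by
  obtain ⟨M, m, hsM, hpm, hmM⟩ := mem_prothSemigroup_iff.1 hs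
  induction M using Nat.strong_induction_on generalizing m with
  | _ M ih =>
    have hm := le_popcount_sub_one_of_forall_ne_add hap hsM hmM
    by_cases hMN : M < 2 ^ (N + 1)
    · exact ⟨M, m, hsM, hpm, hm, hMN⟩
    · obtain ⟨M', hM', m', heq, hpm', hmM'⟩ :=
        exists_decomp_lt_of_two_pow_le hK hKN (not_lt.1 hMN) hm
      exact ih M' hM' m' (hsM.trans heq.symm) hpm' hmM'

lemma sum_Ico_two_pow_add {a b : ℕ} (h : a ≤ b) : ∑ i ∈ Ico a b, 2 ^ i + 2 ^ a = 2 ^ b := by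
  induction b, h using Nat.le_induction with
  | base => simp
  | succ b hab ih => rw [sum_Ico_succ_top hab, add_right_comm, ih, pow_succ]; ring

/-- The binary digits of `∑ i ∈ S, 2 ^ i + 2 ^ v` after splitting `2 ^ v` into
`2 ^ (v - d) + 2 ^ (v - d) + 2 ^ (v - d + 1) + ⋯ + 2 ^ (v - 1)`. -/
def splitDigits (S : Finset ℕ) (v d i : ℕ) : ℕ :=
  (if i ∈ S then 1 else 0) + (if i ∈ Ico (v - d) v then 1 else 0) + (if i = v - d then 1 else 0)

section splitDigits

variable {S : Finset ℕ} {v d : ℕ}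

lemma splitDigits_le_two (hS : ∀ i ∈ S, v < i) (i : ℕ) : splitDigits S v d i ≤ 2 := by
  by_cases hi : i ∈ S
  · have := hS i hi
    simp only [splitDigits, hi, mem_Ico, if_true]
    split_ifs <;> omega
  · simp only [splitDigits, hi, mem_Ico, if_false]
    split_ifs <;> omega

lemma splitDigits_of_lt (hS : ∀ i ∈ S, v < i) {i : ℕ} (hi : i < v - d) :
    splitDigits S v d i = 0 := by
  have hiS : i ∉ S := fun h => by have := hS i h; omega
  simp only [splitDigits, hiS, mem_Ico, if_false]
  split_ifs <;> omega

lemma eq_of_splitDigits_eq_two (hS : ∀ i ∈ S, v < i) {j : ℕ} (hj : splitDigits S v d j = 2) :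
    j = v - d := by
  by_cases hjS : j ∈ S
  · have := hS j hjS
    simp only [splitDigits, hjS, mem_Ico, if_true] at hj
    split_ifs at hj <;> omega
  · simp only [splitDigits, hjS, mem_Ico, if_false] at hj
    split_ifs at hj <;> omega

lemma sum_splitDigits_mul {I : Finset ℕ} (f : ℕ → ℕ) (hSI : S ⊆ I)
    (hvI : Icc (v - d) v ⊆ I) :
    ∑ i ∈ I, splitDigits S v d i * f i =
      ∑ i ∈ S, f i + ∑ i ∈ Ico (v - d) v, f i + f (v - d) := by
  have hIco : Ico (v - d) v ⊆ I := Ico_subset_Icc_self.trans hvI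
  have hmem : v - d ∈ I := hvI (left_mem_Icc.2 (Nat.sub_le v d))
  simp only [splitDigits, add_mul, boole_mul, sum_add_distrib, sum_ite_mem, sum_ite_eq',
    inter_eq_right.2 hSI, inter_eq_right.2 hIco, hmem, if_true]

end splitDigits

lemma exists_digits_of_le_popcount_sub_one {N M m : ℕ} (hM : M < 2 ^ (N + 1))
    (hpm : popcount M ≤ m) (hm : m ≤ popcount (M - 1)) :
    ∃ a : ℕ → ℕ, (∀ i, a i ≤ 2) ∧ (∀ j, a j = 2 → ∀ i < j, a i = 0) ∧
      ∑ i ∈ Icc 1 N, a i * 2 ^ i = M ∧ ∑ i ∈ Icc 1 N, a i = m := by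
  rcases eq_or_ne M 0 with rfl | hM0
  · exact ⟨0, by simp, by simp, by simp, by simp at hm ⊢; omega⟩
  obtain ⟨v, _, ⟨w, rfl⟩, rfl⟩ := Nat.exists_eq_two_pow_mul_odd hM0
  rw [popcount_two_pow_mul, popcount_two_mul_add_one] at hpm
  rw [popcount_two_pow_mul_odd_sub_one] at hm
  have hsplit : 2 ^ v * (2 * w + 1) = 2 ^ (v + 1) * w + 2 ^ v := by ring
  have hM' : 2 ^ (v + 1) * w + 2 ^ v < 2 ^ (N + 1) := hsplit ▸ hM
  have hvN : v ≤ N := by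
    have : 2 ^ v < 2 ^ (N + 1) := (Nat.le_mul_of_pos_right _ (by omega)).trans_lt hM
    have := (Nat.pow_lt_pow_iff_right one_lt_two).1 this
    omega
  set d := m - (popcount w + 1)
  set S := (2 ^ (v + 1) * w).bitIndices.toFinset
  have hS : ∀ i ∈ S, v < i := fun i hi => by
    simp only [S, List.mem_toFinset, Nat.bitIndices_two_pow_mul, List.mem_map] at hi
    omega
  have hSI : S ⊆ Icc 1 N := fun i hi => by
    have h2i := Nat.two_pow_le_of_mem_bitIndices (List.mem_toFinset.1 hi)
    have := (Nat.pow_lt_pow_iff_right one_lt_two).1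
      (h2i.trans_lt ((Nat.le_add_right _ _).trans_lt hM'))
    have := hS i hi
    exact mem_Icc.2 ⟨by omega, by omega⟩
  have hvI : Icc (v - d) v ⊆ Icc 1 N := Icc_subset_Icc (by omega) hvN
  refine ⟨splitDigits S v d, splitDigits_le_two hS, fun j hj i hij => ?_, ?_, ?_⟩
  · exact splitDigits_of_lt hS (eq_of_splitDigits_eq_two hS hj ▸ hij)
  · rw [sum_splitDigits_mul _ hSI hvI, sum_toFinset_bitIndices_two_pow, add_assoc,
      sum_Ico_two_pow_add (Nat.sub_le v d), hsplit]
  · have hcard : S.card = popcount w := by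
      rw [List.toFinset_card_of_nodup Nat.bitIndices_nodup]
      exact popcount_two_pow_mul (v + 1) w
    have := sum_splitDigits_mul (fun _ => 1) hSI hvI
    simp only [mul_one, sum_const, hcard, Nat.card_Ico, smul_eq_mul] at this
    omega

lemma add_four_le_two_pow {t : ℕ} (ht : 3 ≤ t) : t + 4 ≤ 2 ^ t := by
  induction t, ht using Nat.le_induction with
  | base => norm_num
  | succ t _ ih => rw [pow_succ]; omega

lemma proth_multiplier_bounds {n r : ℕ} (hn : 2 < n) (hr : 1 ≤ r) :
    n + r + 2 ≤ (2 ^ r + 1) * 2 ^ n ∧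
      (2 ^ r + 1) * 2 ^ n + (n + r) + 3 ≤ 2 ^ (n + r + 1) := by
  obtain ⟨t, ht⟩ : ∃ t, n + r = t + 1 := ⟨n + r - 1, by omega⟩
  have hK : (2 ^ r + 1) * 2 ^ n = 2 * 2 ^ t + 2 ^ n := by
    rw [add_mul, one_mul, ← pow_add, add_comm r, ht, pow_succ']
  have hnt : 2 ^ n ≤ 2 ^ t := Nat.pow_le_pow_right two_pos (by omega)
  have ht4 : t + 4 ≤ 2 ^ t := add_four_le_two_pow (by omega)
  have := Nat.two_pow_pos n
  rw [hK, ht, pow_succ, pow_succ]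
  omega

theorem apery_representation_general (n r : ℕ) (hn : 2 < n) (hr : 1 ≤ r)
    (s : ℕ) (hs : s ∈ AddSubmonoid.closure
        {m : ℕ | ∃ i : ℕ, m = (2 ^ r + 1) * 2 ^ (n + i) + 1})
    (hap : ∀ t ∈ AddSubmonoid.closure
        {m : ℕ | ∃ i : ℕ, m = (2 ^ r + 1) * 2 ^ (n + i) + 1},
        s ≠ t + ((2 ^ r + 1) * 2 ^ n + 1)) :
    ∃ a : ℕ → ℕ, (∀ i, a i ≤ 2) ∧
      (∀ j, a j = 2 → ∀ i, i < j → a i = 0) ∧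
      s = ∑ i ∈ Finset.Icc 1 (n + r), a i * ((2 ^ r + 1) * 2 ^ (n + i) + 1) := by
  have hgen (i : ℕ) : (2 ^ r + 1) * 2 ^ (n + i) + 1 = (2 ^ r + 1) * 2 ^ n * 2 ^ i + 1 := by ring
  simp only [hgen] at hs hap ⊢
  obtain ⟨hK, hKN⟩ := proth_multiplier_bounds hn hr
  obtain ⟨M, m, rfl, hpm, hm, hMN⟩ := exists_decomp_lt_two_pow hK hKN hs hap
  obtain ⟨a, ha2, ha, hsum, hcount⟩ := exists_digits_of_le_popcount_sub_one hMN hpm hm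
  refine ⟨a, ha2, ha, ?_⟩
  rw [← hsum, ← hcount, mul_sum, ← sum_add_distrib]
  exact sum_congr rfl fun i _ => by ring

theorem apery_representation (n r : ℕ) (hn : 2 < n) (hr : 1 ≤ r) (hrn : r + 1 ≤ n)
    (s : ℕ) (hs : s ∈ AddSubmonoid.closure
        {m : ℕ | ∃ i : ℕ, m = (2 ^ r + 1) * 2 ^ (n + i) + 1})
    (hap : ∀ t ∈ AddSubmonoid.closure
        {m : ℕ | ∃ i : ℕ, m = (2 ^ r + 1) * 2 ^ (n + i) + 1},
        s ≠ t + ((2 ^ r + 1) * 2 ^ n + 1)) :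
    ∃ a : ℕ → ℕ, (∀ i, a i ≤ 2) ∧
      (∀ j, a j = 2 → ∀ i, i < j → a i = 0) ∧
      s = ∑ i ∈ Finset.Icc 1 (n + r), a i * ((2 ^ r + 1) * 2 ^ (n + i) + 1) :=
  apery_representation_general n r hn hr s hs hap
end

section
/- Let n > 2, k odd with k < 2^n, and let P_k(n) be the Proth numerical semigroup with s_0 = k·2^n + 1. If s ∈ P_k(n) and s is not congruent to 0 modulo s_0, then s + 1 ∈ P_k(n). -/
/- Every generator `s_i = k·2^(n+i) + 1` with `i ≥ 1` satisfies `s_i + 1 = 2·s_{i-1}`, so `s_i + 1`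
lies in the semigroup, while `s_0` is a multiple of `s_0`. The dichotomy "multiple of `s_0`, or
successor in the semigroup" holds for the generators and is preserved under sums, hence holds for
every element. -/

namespace AddSubmonoid

variable {M : Type*} [AddCommMonoid M]

theorem mem_or_add_mem_closure {A : Set M} {D : AddSubmonoid M} {e : M}
    (hA : ∀ a ∈ A, a ∈ D ∨ a + e ∈ closure A) {x : M} (hx : x ∈ closure A) :
    x ∈ D ∨ x + e ∈ closure A := by
  induction hx using closure_induction with
  | mem a ha => exact hA a ha
  | zero => exact .inl D.zero_mem
  | add a b ha hb iha ihb =>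
    rcases iha with ha' | ha'
    · rcases ihb with hb' | hb'
      · exact .inl (D.add_mem ha' hb')
      · exact .inr (add_assoc a b e ▸ add_mem ha hb')
    · exact .inr (add_right_comm a e b ▸ add_mem ha' hb)

end AddSubmonoid

theorem proth_generator_succ_add_one (n k j : ℕ) :
    k * 2 ^ (n + (j + 1)) + 1 + 1 = (k * 2 ^ (n + j) + 1) + (k * 2 ^ (n + j) + 1) := by
  ring

theorem succ_mem_general (n k : ℕ)
    (s : ℕ) (hs : s ∈ AddSubmonoid.closure {m : ℕ | ∃ i : ℕ, m = k * 2 ^ (n + i) + 1})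
    (hmod : ¬ (k * 2 ^ n + 1) ∣ s) :
    s + 1 ∈ AddSubmonoid.closure {m : ℕ | ∃ i : ℕ, m = k * 2 ^ (n + i) + 1} := by
  set G := {m : ℕ | ∃ i : ℕ, m = k * 2 ^ (n + i) + 1}
  have hgen : ∀ a ∈ G, a ∈ (Ideal.span {k * 2 ^ n + 1}).toAddSubmonoid ∨
      a + 1 ∈ AddSubmonoid.closure G := by
    rintro _ ⟨_ | j, rfl⟩
    · exact .inl (Ideal.subset_span rfl)
    · have hj : k * 2 ^ (n + j) + 1 ∈ AddSubmonoid.closure G :=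
        AddSubmonoid.subset_closure ⟨j, rfl⟩
      exact .inr (proth_generator_succ_add_one n k j ▸ add_mem hj hj)
  refine (AddSubmonoid.mem_or_add_mem_closure hgen hs).resolve_left ?_
  simpa [Ideal.mem_span_singleton] using hmod

theorem succ_mem (n k : ℕ) (hn : 2 < n) (hk : Odd k) (hkpos : 0 < k) (hklt : k < 2 ^ n)
    (s : ℕ) (hs : s ∈ AddSubmonoid.closure {m : ℕ | ∃ i : ℕ, m = k * 2 ^ (n + i) + 1})
    (hmod : ¬ (k * 2 ^ n + 1) ∣ s) :
    s + 1 ∈ AddSubmonoid.closure {m : ℕ | ∃ i : ℕ, m = k * 2 ^ (n + i) + 1} :=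
  succ_mem_general n k s hs hmod
end

section
/- Let n > 2, k = 2^r + 1 with r ≥ 1 and r + 1 ≤ n, and s_i = k·2^{n+i} + 1. The Frobenius number of P_k(n) (the largest integer not in P_k(n)) equals 2·s_1 + s_n + s_{n+r} - s_0. -/
/-!
Put `q = k * 2 ^ n = 2 ^ (n + r) + 2 ^ n`. A sum of generators `s_{i_1} + ⋯ + s_{i_t}` is
`q * M + t` with `M = 2 ^ i_1 + ⋯ + 2 ^ i_t`, so `t ≤ M`, and splitting
`2 ^ (i + 1) = 2 ^ i + 2 ^ i` shows that once `M` is a sum of `t₀` powers of two it is a sum of `t`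
of them for every `t₀ ≤ t ≤ M`.
The claimed Frobenius number is `q * (q + 3) + 3`; writing it as `q * M + t` with `t ≤ M` forces
`M = q + 3 = 2 ^ (n + r) + 2 ^ n + 2 + 1` and `t = 3`, but this `M` has four binary digits.
Every larger `m` is `q * M + t` with `M = ⌈m / (q + 1)⌉ ≥ q + 3` and `max 4 (M - q) ≤ t ≤ M`,
and such an `M` is a sum of `max 4 (M - q)` powers of two.
-/

def twoPowSum (s : Multiset ℕ) : ℕ := (s.map (2 ^ ·)).sum

@[simp] lemma twoPowSum_zero : twoPowSum 0 = 0 := rfl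

@[simp] lemma twoPowSum_cons (i : ℕ) (s : Multiset ℕ) :
    twoPowSum (i ::ₘ s) = 2 ^ i + twoPowSum s := by
  simp [twoPowSum]

@[simp] lemma twoPowSum_singleton (i : ℕ) : twoPowSum {i} = 2 ^ i := by
  simp [twoPowSum]

@[simp] lemma twoPowSum_add (s t : Multiset ℕ) :
    twoPowSum (s + t) = twoPowSum s + twoPowSum t := by
  simp [twoPowSum]

@[simp] lemma twoPowSum_replicate_zero (k : ℕ) : twoPowSum (Multiset.replicate k 0) = k := by
  simp [twoPowSum]

lemma card_le_twoPowSum (s : Multiset ℕ) : Multiset.card s ≤ twoPowSum s := by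
  induction s using Multiset.induction with
  | empty => simp
  | cons i s ih =>
    have := Nat.one_le_two_pow (n := i)
    simp only [Multiset.card_cons, twoPowSum_cons]
    omega

/-- Splitting a summand `2 ^ (i + 1)` into `2 ^ i + 2 ^ i` adds one term. -/
lemma exists_card_succ_twoPowSum_eq {s : Multiset ℕ} (h : Multiset.card s < twoPowSum s) :
    ∃ s' : Multiset ℕ,
      Multiset.card s' = Multiset.card s + 1 ∧ twoPowSum s' = twoPowSum s := by
  induction s using Multiset.induction with
  | empty => simp at h
  | cons i s ih =>
    cases i with
    | zero =>
      simp only [Multiset.card_cons, twoPowSum_cons, pow_zero] at h ⊢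
      obtain ⟨s', hcard, hsum⟩ := ih (by omega)
      exact ⟨0 ::ₘ s', by simp [hcard], by simp [hsum]⟩
    | succ i =>
      refine ⟨i ::ₘ i ::ₘ s, by simp, ?_⟩
      simp only [twoPowSum_cons, pow_succ]
      ring

lemma exists_card_eq_twoPowSum_eq {s : Multiset ℕ} {t : ℕ} (hst : Multiset.card s ≤ t)
    (ht : t ≤ twoPowSum s) :
    ∃ s' : Multiset ℕ, Multiset.card s' = t ∧ twoPowSum s' = twoPowSum s := by
  induction t, hst using Nat.le_induction with
  | base => exact ⟨s, rfl, rfl⟩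
  | succ t _ ih =>
    obtain ⟨s', hcard, hsum⟩ := ih (by omega)
    obtain ⟨s'', hcard', hsum'⟩ := exists_card_succ_twoPowSum_eq (s := s') (by omega)
    exact ⟨s'', by omega, by omega⟩

lemma mem_closure_iff_exists_twoPowSum (c n m : ℕ) :
    m ∈ AddSubmonoid.closure {x : ℕ | ∃ i : ℕ, x = c * 2 ^ (n + i) + 1} ↔
      ∃ s : Multiset ℕ, m = c * 2 ^ n * twoPowSum s + Multiset.card s := by
  constructor
  · intro hm
    induction hm using AddSubmonoid.closure_induction with
    | mem x hx =>
      obtain ⟨i, rfl⟩ := hx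
      exact ⟨{i}, by simp [twoPowSum, pow_add, mul_assoc]⟩
    | zero => exact ⟨0, by simp⟩
    | add x y _ _ hx hy =>
      obtain ⟨s, rfl⟩ := hx
      obtain ⟨t, rfl⟩ := hy
      exact ⟨s + t, by simp only [twoPowSum_add, Multiset.card_add]; ring⟩
  · rintro ⟨s, rfl⟩
    induction s using Multiset.induction with
    | empty => simp
    | cons i s ih =>
      have hgen : c * 2 ^ (n + i) + 1 ∈
          AddSubmonoid.closure {x : ℕ | ∃ i : ℕ, x = c * 2 ^ (n + i) + 1} :=
        AddSubmonoid.subset_closure ⟨i, rfl⟩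
      convert add_mem hgen ih using 1
      simp only [twoPowSum_cons, Multiset.card_cons, pow_add]
      ring

lemma two_pow_ne_two_pow_add_two_pow {a b : ℕ} (hba : b < a) (z : ℕ) :
    2 ^ z ≠ 2 ^ a + 2 ^ b := by
  intro h
  have hb : 0 < 2 ^ b := by positivity
  have hab : 2 ^ b < 2 ^ a := Nat.pow_lt_pow_right (by norm_num) hba
  rcases Nat.lt_or_ge a z with haz | hza
  · have : 2 ^ (a + 1) ≤ 2 ^ z := Nat.pow_le_pow_right (by norm_num) haz
    rw [pow_succ] at this
    omega
  · have : 2 ^ z ≤ 2 ^ a := Nat.pow_le_pow_right (by norm_num) hza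
    omega

lemma two_pow_eq_or_four_dvd (x : ℕ) : 2 ^ x = 1 ∨ 2 ^ x = 2 ∨ 4 ∣ 2 ^ x := by
  rcases x with _ | _ | x
  · simp
  · simp
  · exact Or.inr (Or.inr ⟨2 ^ x, by ring⟩)

/-- Reducing mod 4 forces `{2 ^ x, 2 ^ y, 2 ^ z} = {1, 2, 2 ^ a + 2 ^ b}`. -/
lemma two_pow_add_two_pow_add_two_pow_ne {a b : ℕ} (hba : b < a) (hb : 2 ≤ b) (x y z : ℕ) :
    2 ^ x + 2 ^ y + 2 ^ z ≠ 2 ^ a + 2 ^ b + 3 := by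
  intro h
  have hdvd : ∀ e, 2 ≤ e → 4 ∣ 2 ^ e := fun e he => by simpa using Nat.pow_dvd_pow 2 he
  have h4 : 4 ≤ 2 ^ b := by simpa using Nat.pow_le_pow_right (n := 2) (by norm_num) hb
  have hx := two_pow_eq_or_four_dvd x
  have hy := two_pow_eq_or_four_dvd y
  have hz := two_pow_eq_or_four_dvd z
  have hx' := two_pow_ne_two_pow_add_two_pow hba x
  have hy' := two_pow_ne_two_pow_add_two_pow hba y
  have hz' := two_pow_ne_two_pow_add_two_pow hba z
  have ha := hdvd a (by omega)
  have hb := hdvd b hb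
  generalize 2 ^ a = A, 2 ^ b = B, 2 ^ x = X, 2 ^ y = Y, 2 ^ z = Z at *
  omega

/-- Start from `2 ^ a + 2 ^ b + 2 + 1` if `M = 2 ^ a + 2 ^ b + 3`, and otherwise from
`2 ^ a + 2 ^ b + 2 + 2 + 1 + ⋯ + 1` with `M - 2 ^ a - 2 ^ b` terms; then split summands. -/
lemma exists_card_eq_twoPowSum_eq_of_le (a b : ℕ) {M t : ℕ} (hM : 2 ^ a + 2 ^ b + 3 ≤ M)
    (ht : 4 ≤ t) (hMt : M ≤ 2 ^ a + 2 ^ b + t) (htM : t ≤ M) :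
    ∃ s : Multiset ℕ, Multiset.card s = t ∧ twoPowSum s = M := by
  rcases hM.eq_or_lt with rfl | hM
  · obtain ⟨s, hs, hsum⟩ := exists_card_eq_twoPowSum_eq (s := {a, b, 1, 0}) (t := t)
      (by simpa using ht) (by simpa [add_assoc] using htM)
    exact ⟨s, hs, by simp [hsum, add_assoc]⟩
  · obtain ⟨s, hs, hsum⟩ := exists_card_eq_twoPowSum_eq
      (s := {a, b, 1, 1} + Multiset.replicate (M - (2 ^ a + 2 ^ b + 4)) 0) (t := t)
      (by simp only [Multiset.insert_eq_cons, Multiset.cons_add, Multiset.singleton_add,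
        Multiset.card_cons, Multiset.card_replicate]; omega)
      (by simp only [Multiset.insert_eq_cons, Multiset.cons_add, Multiset.singleton_add,
        twoPowSum_cons, twoPowSum_replicate_zero]; omega)
    refine ⟨s, hs, hsum.trans ?_⟩
    simp only [Multiset.insert_eq_cons, Multiset.cons_add, Multiset.singleton_add,
      twoPowSum_cons, twoPowSum_replicate_zero]
    omega

lemma exists_eq_mul_add_of_mul_self_le {q m : ℕ} (h : q * q ≤ m) :
    ∃ M t : ℕ, m = q * M + t ∧ t ≤ M ∧ M ≤ q + t := by
  -- `M = ⌈m / (q + 1)⌉`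
  obtain ⟨M, ρ, hρ, hdiv⟩ : ∃ M ρ, ρ < q + 1 ∧ m + q = (q + 1) * M + ρ :=
    ⟨_, _, Nat.mod_lt _ q.succ_pos, (Nat.div_add_mod _ _).symm⟩
  have hqM : q ≤ M := by nlinarith
  have hexpand : (q + 1) * M = q * M + M := by ring
  exact ⟨M, M + ρ - q, by omega, by omega, by omega⟩

lemma eq_and_eq_of_mul_add_eq_mul_add {q M t N u : ℕ} (htM : t ≤ M) (hu : u < q)
    (hN : N ≤ q + u) (h : q * M + t = q * N + u) : M = N ∧ t = u := by
  have hMN : M = N := by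
    rcases lt_trichotomy M N with hlt | heq | hgt
    · nlinarith
    · exact heq
    · nlinarith
  subst hMN
  exact ⟨rfl, by omega⟩

lemma exists_eq_mul_add_of_lt {q m : ℕ} (h : q * (q + 3) + 3 < m) :
    ∃ M t : ℕ, m = q * M + t ∧ q + 3 ≤ M ∧ 4 ≤ t ∧ t ≤ M ∧ M ≤ q + t := by
  obtain ⟨M, t, rfl, htM, hMt⟩ := exists_eq_mul_add_of_mul_self_le (q := q) (by nlinarith)
  have hM : q + 3 ≤ M := by nlinarith
  refine ⟨M, t, rfl, hM, ?_, htM, hMt⟩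
  by_contra! ht
  obtain rfl : M = q + 3 := by omega
  omega

theorem proth_frobenius_number_general (n r : ℕ) (hn : 2 < n) (hr : 1 ≤ r) :
    IsGreatest {m : ℕ | m ∉ AddSubmonoid.closure
        {m : ℕ | ∃ i : ℕ, m = (2 ^ r + 1) * 2 ^ (n + i) + 1}}
      (2 * ((2 ^ r + 1) * 2 ^ (n + 1) + 1) + ((2 ^ r + 1) * 2 ^ (n + n) + 1)
        + ((2 ^ r + 1) * 2 ^ (n + (n + r)) + 1) - ((2 ^ r + 1) * 2 ^ n + 1)) := by
  set q := (2 ^ r + 1) * 2 ^ n with hq_def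
  have hq : q = 2 ^ (n + r) + 2 ^ n := by rw [hq_def, pow_add]; ring
  have hq4 : 4 ≤ q := by
    rw [hq]
    calc 4 = 2 ^ 2 := rfl
      _ ≤ 2 ^ n := Nat.pow_le_pow_right (by norm_num) hn.le
      _ ≤ _ := Nat.le_add_left _ _
  have hF : 2 * ((2 ^ r + 1) * 2 ^ (n + 1) + 1) + ((2 ^ r + 1) * 2 ^ (n + n) + 1)
      + ((2 ^ r + 1) * 2 ^ (n + (n + r)) + 1) - q - 1 = q * (q + 3) + 3 := by
    rw [Nat.sub_sub, Nat.sub_eq_of_eq_add]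
    simp only [hq_def, pow_add]
    ring
  rw [Nat.sub_add_eq .., hF]
  refine ⟨?_, fun m hm => ?_⟩
  · rw [Set.mem_ofPred_eq, mem_closure_iff_exists_twoPowSum]
    rintro ⟨s, hs⟩
    obtain ⟨hsum, hcard⟩ := eq_and_eq_of_mul_add_eq_mul_add (card_le_twoPowSum s)
      (by omega) le_rfl hs.symm
    obtain ⟨x, y, z, rfl⟩ := Multiset.card_eq_three.1 hcard
    refine two_pow_add_two_pow_add_two_pow_ne (a := n + r) (b := n) (by omega) hn.le x y z ?_
    rw [← hq_def, hq] at hsum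
    simpa [add_assoc] using hsum
  · by_contra! hlt
    obtain ⟨M, t, rfl, hM, ht, htM, hMt⟩ := exists_eq_mul_add_of_lt hlt
    obtain ⟨s, hcard, hsum⟩ :=
      exists_card_eq_twoPowSum_eq_of_le (n + r) n (hq ▸ hM) ht (hq ▸ hMt) htM
    exact hm ((mem_closure_iff_exists_twoPowSum _ _ _).2 ⟨s, by rw [hsum, hcard]⟩)

theorem proth_frobenius_number (n r : ℕ) (hn : 2 < n) (hr : 1 ≤ r) (hrn : r + 1 ≤ n) :
    IsGreatest {m : ℕ | m ∉ AddSubmonoid.closure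
        {m : ℕ | ∃ i : ℕ, m = (2 ^ r + 1) * 2 ^ (n + i) + 1}}
      (2 * ((2 ^ r + 1) * 2 ^ (n + 1) + 1) + ((2 ^ r + 1) * 2 ^ (n + n) + 1)
        + ((2 ^ r + 1) * 2 ^ (n + (n + r)) + 1) - ((2 ^ r + 1) * 2 ^ n + 1)) :=
  proth_frobenius_number_general n r hn hr
end

section
/- Let n > 2, k = 2^r + 1 with r ≥ 1 and r + 1 ≤ n. The genus of P_k(n) (the number of nonnegative integers not in P_k(n)) satisfies g(P_k(n)) ≥ k·(2^{n+1} + 2^{2n-1} + 2^{2n+r-1} - 2^{n-1}) + 2. -/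
/-!
Write `K = k * 2 ^ n`, so the generators are `K * 2 ^ i + 1`. A sum of `t` generators has the form
`K * Q + t` with `Q` a sum of `t` powers of two, so `Q` has at most `t` binary digits equal to one.
Since `K ≥ 4`, the only such form of `M = K * (K + 3) + 3` would be `Q = K + 3`, `t = 3`; but
`K + 3 = 2 ^ (n + r) + 2 ^ n + 2 + 1` has four binary ones, so `M` is a gap. The semigroup
contains the coprime generators `K + 1` and `2 * K + 1`, hence has finitely many gaps, and
`x ↦ M - x` maps its elements in `[0, M]` injectively to gaps, so `2 * g ≥ M + 1`.
-/

open Finset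

namespace Nat

theorem length_bitIndices_succ_le (a : ℕ) :
    (a + 1).bitIndices.length ≤ a.bitIndices.length + 1 := by
  induction a using evenOddRec with
  | h0 => simp
  | h_even a _ => simp
  | h_odd a ih =>
    rw [show 2 * a + 1 + 1 = 2 * (a + 1) by ring]
    simp only [bitIndices_two_mul, bitIndices_two_mul_add_one, List.length_map,
      List.length_cons]
    omega

theorem length_bitIndices_add_two_pow_le (a i : ℕ) :
    (a + 2 ^ i).bitIndices.length ≤ a.bitIndices.length + 1 := by
  induction i generalizing a with
  | zero => simpa using length_bitIndices_succ_le a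
  | succ i ih =>
    obtain ⟨c, rfl | rfl⟩ := even_or_odd' a
    · rw [show 2 * c + 2 ^ (i + 1) = 2 * (c + 2 ^ i) by ring]
      simpa using ih c
    · rw [show 2 * c + 1 + 2 ^ (i + 1) = 2 * (c + 2 ^ i) + 1 by ring]
      simpa using ih c

theorem length_bitIndices_sum_map_two_pow_le (l : Multiset ℕ) :
    (l.map (2 ^ ·)).sum.bitIndices.length ≤ Multiset.card l := by
  induction l using Multiset.induction with
  | empty => simp
  | cons i l ih =>
    rw [Multiset.map_cons, Multiset.sum_cons, Multiset.card_cons, add_comm]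
    exact (length_bitIndices_add_two_pow_le _ i).trans (by omega)

theorem finite_setOf_notMem_closure {s : Set ℕ} {a b : ℕ} (ha : a ∈ s) (hb : b ∈ s)
    (hab : a.Coprime b) : {m | m ∉ AddSubmonoid.closure s}.Finite := by
  have hgcd : setGcd s = 1 :=
    eq_one_of_dvd_one (hab ▸ Nat.dvd_gcd (setGcd_dvd_of_mem ha) (setGcd_dvd_of_mem hb))
  obtain ⟨N, hN⟩ := exists_mem_closure_of_ge s
  refine (Set.finite_Iio N).subset fun m hm => ?_
  by_contra hge
  exact hm (hN m (not_lt.mp hge) (hgcd ▸ one_dvd m))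

end Nat

theorem AddSubmonoid.add_one_le_two_mul_card_notMem {S : AddSubmonoid ℕ}
    (hfin : {m | m ∉ S}.Finite) {M : ℕ} (hM : M ∉ S) :
    M + 1 ≤ 2 * Nat.card {m | m ∉ S} := by
  classical
  set A := (range (M + 1)).filter (· ∈ S)
  set B := (range (M + 1)).filter (· ∉ S)
  have hAB : A.card ≤ B.card := by
    refine card_le_card_of_injOn (M - ·) (fun x hx => ?_) (fun x hx y hy hxy => ?_)
    · simp only [A, B, coe_filter, mem_range, Set.mem_ofPred_eq] at hx ⊢
      refine ⟨by omega, fun h => hM ?_⟩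
      simpa [Nat.add_sub_cancel' (by omega : x ≤ M)] using add_mem hx.2 h
    · simp only [A, coe_filter, mem_range, Set.mem_ofPred_eq] at hx hy hxy
      omega
  have hB : B.card ≤ Nat.card {m | m ∉ S} := by
    rw [Nat.card_coe_set_eq, Set.ncard_eq_toFinset_card _ hfin]
    exact card_le_card fun x hx => by simpa [B] using (mem_filter.mp hx).2
  have hsplit : A.card + B.card = M + 1 :=
    (card_filter_add_card_filter_not (· ∈ S)).trans (card_range _)
  omega

section ProthSemigroup

variable {K : ℕ}

theorem exists_multiset_of_mem_closure_mul_two_pow_add_one {x : ℕ}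
    (hx : x ∈ AddSubmonoid.closure {m | ∃ i, m = K * 2 ^ i + 1}) :
    ∃ l : Multiset ℕ, x = K * (l.map (2 ^ ·)).sum + Multiset.card l := by
  induction hx using AddSubmonoid.closure_induction with
  | mem y hy =>
    obtain ⟨i, rfl⟩ := hy
    exact ⟨{i}, by simp⟩
  | zero => exact ⟨0, by simp⟩
  | add x y _ _ ihx ihy =>
    obtain ⟨l₁, rfl⟩ := ihx
    obtain ⟨l₂, rfl⟩ := ihy
    refine ⟨l₁ + l₂, ?_⟩
    simp only [Multiset.map_add, Multiset.sum_add, Multiset.card_add]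
    ring

theorem mul_add_three_add_three_notMem_closure (hK : 3 < K)
    (hbits : 3 < (K + 3).bitIndices.length) :
    K * (K + 3) + 3 ∉ AddSubmonoid.closure {m | ∃ i, m = K * 2 ^ i + 1} := by
  intro hM
  obtain ⟨l, hl⟩ := exists_multiset_of_mem_closure_mul_two_pow_add_one hM
  set Q := (l.map (2 ^ ·)).sum
  have hcard : Multiset.card l ≤ Q := by
    simpa using Multiset.sum_map_le_sum_map (fun _ => 1) (2 ^ ·) fun i _ => Nat.one_le_two_pow
  -- `K * Q ≤ K * (K + 3) + 3 ≤ (K + 1) * Q` leaves only `Q = K + 3` once `3 < K`.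
  have hQ : Q = K + 3 := by
    rcases lt_trichotomy Q (K + 3) with h | h | h
    · nlinarith
    · exact h
    · nlinarith
  have hT : Multiset.card l = 3 := by rw [hQ] at hl; omega
  have hlen : Q.bitIndices.length ≤ Multiset.card l :=
    Nat.length_bitIndices_sum_map_two_pow_le l
  rw [← hQ] at hbits
  omega

theorem finite_setOf_notMem_closure_mul_two_pow_add_one :
    {m | m ∉ AddSubmonoid.closure {m | ∃ i, m = K * 2 ^ i + 1}}.Finite := by
  refine Nat.finite_setOf_notMem_closure (a := K + 1) (b := 2 * K + 1)
    ⟨0, by ring⟩ ⟨1, by ring⟩ ?_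
  rw [show 2 * K + 1 = (K + 1) + K by ring, Nat.coprime_self_add_right,
    Nat.coprime_self_add_left]
  exact Nat.coprime_one_left K

end ProthSemigroup

theorem bitIndices_two_pow_mul_two_pow_add_one_add_three {n r : ℕ} (hn : 1 < n) (hr : 0 < r) :
    ((2 ^ r + 1) * 2 ^ n + 3).bitIndices = [0, 1, n, n + r] := by
  have hsum : (2 ^ r + 1) * 2 ^ n + 3 = ([0, 1, n, n + r].map (2 ^ ·)).sum := by
    simp only [List.map_cons, List.map_nil, List.sum_cons, List.sum_nil, pow_add]
    ring
  rw [hsum, Nat.bitIndices_sum_map_two_pow]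
  simp [List.sortedLT_iff_pairwise, hn, hr, (by omega : 0 < n), (by omega : 1 < n + r)]

theorem two_mul_proth_genus_bound_eq {n : ℕ} (hn : 1 ≤ n) (r : ℕ) :
    2 * ((2 ^ r + 1) * (2 ^ (n + 1) + 2 ^ (2 * n - 1) + 2 ^ (2 * n + r - 1) - 2 ^ (n - 1)) + 2) =
      (2 ^ r + 1) * 2 ^ n * ((2 ^ r + 1) * 2 ^ n + 3) + 3 + 1 := by
  obtain ⟨m, rfl⟩ : ∃ m, n = m + 1 := ⟨n - 1, by omega⟩
  have hsub : 2 ^ (m + 2) + 2 ^ (2 * m + 1) + 2 ^ (2 * m + r + 1) - 2 ^ m =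
      3 * 2 ^ m + 2 ^ (2 * m + 1) * (2 ^ r + 1) :=
    Nat.sub_eq_of_eq_add (by ring)
  rw [show 2 * (m + 1) - 1 = 2 * m + 1 by omega,
    show 2 * (m + 1) + r - 1 = 2 * m + r + 1 by omega, Nat.add_sub_cancel, hsub]
  ring

theorem proth_genus_bound_general (n r : ℕ) (hn : 2 < n) (hr : 1 ≤ r) :
    Nat.card {m : ℕ | m ∉ AddSubmonoid.closure
        {m : ℕ | ∃ i : ℕ, m = (2 ^ r + 1) * 2 ^ (n + i) + 1}} ≥
      (2 ^ r + 1) * (2 ^ (n + 1) + 2 ^ (2 * n - 1) + 2 ^ (2 * n + r - 1) - 2 ^ (n - 1)) + 2 := by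
  set K := (2 ^ r + 1) * 2 ^ n with hK
  have hgen : {m : ℕ | ∃ i : ℕ, m = (2 ^ r + 1) * 2 ^ (n + i) + 1} =
      {m | ∃ i, m = K * 2 ^ i + 1} := by
    simp only [hK, pow_add, mul_assoc]
  have hK3 : 3 < K := by
    have : 2 ^ 2 ≤ 2 ^ n := Nat.pow_le_pow_right two_pos (by omega)
    nlinarith [Nat.one_le_two_pow (n := r)]
  have hbits : 3 < (K + 3).bitIndices.length := by
    rw [hK, bitIndices_two_pow_mul_two_pow_add_one_add_three (by omega) (by omega)]
    simp
  rw [hgen]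
  have hgap := AddSubmonoid.add_one_le_two_mul_card_notMem
    finite_setOf_notMem_closure_mul_two_pow_add_one
    (mul_add_three_add_three_notMem_closure hK3 hbits)
  have hbound := two_mul_proth_genus_bound_eq (by omega : 1 ≤ n) r
  rw [← hK] at hbound
  omega

theorem proth_genus_bound (n r : ℕ) (hn : 2 < n) (hr : 1 ≤ r) (hrn : r + 1 ≤ n) :
    Nat.card {m : ℕ | m ∉ AddSubmonoid.closure
        {m : ℕ | ∃ i : ℕ, m = (2 ^ r + 1) * 2 ^ (n + i) + 1}} ≥
      (2 ^ r + 1) * (2 ^ (n + 1) + 2 ^ (2 * n - 1) + 2 ^ (2 * n + r - 1) - 2 ^ (n - 1)) + 2 :=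
  proth_genus_bound_general n r hn hr
end

section
/- Let n > 2, k = 2^r + 1 with r ≥ 1 and r + 1 ≤ n, and s_i = k·2^{n+i} + 1. For 1 ≤ i ≤ r and 1 ≤ j ≤ n - 2, the integer (2·s_j + s_{j+1} + ⋯ + s_{n-1} + s_{n+r}) - (2·s_i + s_{i+1} + ⋯ + s_{n+r-1}) = k·2^{2n} + 1 - r - j + i does not belong to P_k(n). -/
/-!
Write `K = (2^r + 1)·2^n`, so that `s_l = K·2^l + 1`. An element `Σ λ_l s_l` of `P_k(n)` is
`m + K·w` with `m = Σ λ_l ≤ w = Σ λ_l 2^l`. For `N = K·2^n + 1 - d` with `d = r + j - i ≥ 1`,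
this forces `m < 2^n`, and reducing modulo `K` gives `m + d ≡ 1`, where `1 ≤ m + d ≤ K`.
Hence `m = 0`, so `N = 0`, which is absurd.
-/

open Finset

lemma two_mul_add_sum_Ico_eq (c e a b : ℕ) (hab : a < b) :
    2 * (c * 2 ^ (e + a) + 1) + ∑ t ∈ Ico (a + 1) b, (c * 2 ^ (e + t) + 1)
      = c * 2 ^ (e + b) + 1 + (b - a) := by
  induction b, hab using Nat.le_induction with
  | base =>
    have : c * 2 ^ (e + (a + 1)) = 2 * (c * 2 ^ (e + a)) := by ring
    rw [Ico_self, sum_empty, this]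
    omega
  | succ b hab ih =>
    have : c * 2 ^ (e + (b + 1)) = 2 * (c * 2 ^ (e + b)) := by ring
    rw [sum_Ico_succ_top (by omega), ← add_assoc, ih, this]
    omega

lemma exists_eq_add_mul_of_mem_closure {K x : ℕ}
    (hx : x ∈ AddSubmonoid.closure {y | ∃ c, 1 ≤ c ∧ y = K * c + 1}) :
    ∃ m w, m ≤ w ∧ x = m + K * w ∧ (m = 0 → w = 0) := by
  induction hx using AddSubmonoid.closure_induction with
  | mem y hy =>
    obtain ⟨c, hc, rfl⟩ := hy
    exact ⟨1, c, hc, by ring, by omega⟩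
  | zero => exact ⟨0, 0, le_rfl, rfl, fun _ ↦ rfl⟩
  | add x y _ _ ihx ihy =>
    obtain ⟨m₁, w₁, hmw₁, rfl, h₁⟩ := ihx
    obtain ⟨m₂, w₂, hmw₂, rfl, h₂⟩ := ihy
    exact ⟨m₁ + m₂, w₁ + w₂, by omega, by ring, by omega⟩

lemma notMem_closure_of_add_eq_mul_add_one {K T d N : ℕ} (hT : 1 ≤ T) (hd : 1 ≤ d)
    (hdT : d + T ≤ K + 1) (hN : N + d = K * T + 1) :
    N ∉ AddSubmonoid.closure {y | ∃ c, 1 ≤ c ∧ y = K * c + 1} := by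
  intro hmem
  obtain ⟨m, w, hmw, rfl, hm⟩ := exists_eq_add_mul_of_mem_closure hmem
  have hmT : m < T := by
    by_contra! hTm
    have : K * T ≤ K * w := Nat.mul_le_mul_left K (hTm.trans hmw)
    omega
  have hwT : w ≤ T := by
    by_contra! hTw
    have : K * (T + 1) ≤ K * w := Nat.mul_le_mul_left K hTw
    rw [mul_add_one] at this
    omega
  obtain ⟨e, rfl⟩ := Nat.exists_eq_add_of_le hwT
  have hmd : m + d = K * e + 1 := by rw [mul_add] at hN; omega
  have he : e = 0 := by
    by_contra! he
    have : K * 1 ≤ K * e := Nat.mul_le_mul_left K (by omega)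
    omega
  subst he
  have := hm (by omega)
  omega

theorem difference_not_mem_general (n r i j : ℕ)
    (hi2 : i ≤ r) (hj1 : 1 ≤ j) (hj2 : j ≤ n - 2) :
    (2 * ((2 ^ r + 1) * 2 ^ (n + j) + 1)
        + (∑ t ∈ Finset.Ico (j + 1) n, ((2 ^ r + 1) * 2 ^ (n + t) + 1))
        + ((2 ^ r + 1) * 2 ^ (n + (n + r)) + 1))
      - (2 * ((2 ^ r + 1) * 2 ^ (n + i) + 1)
        + (∑ t ∈ Finset.Ico (i + 1) (n + r), ((2 ^ r + 1) * 2 ^ (n + t) + 1)))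
      = (2 ^ r + 1) * 2 ^ (2 * n) + 1 + i - (r + j) ∧
    (2 ^ r + 1) * 2 ^ (2 * n) + 1 + i - (r + j) ∉
      AddSubmonoid.closure {m : ℕ | ∃ l : ℕ, m = (2 ^ r + 1) * 2 ^ (n + l) + 1} := by
  have hsmall : r + n < 2 ^ r * 2 ^ n := pow_add 2 r n ▸ Nat.lt_two_pow_self
  have hlarge : 2 ^ r * 2 ^ n ≤ (2 ^ r + 1) * 2 ^ n * 2 ^ n := by
    nlinarith [Nat.one_le_two_pow (n := n)]
  have hsq : (2 ^ r + 1) * 2 ^ (2 * n) = (2 ^ r + 1) * 2 ^ n * 2 ^ n := by ring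
  constructor
  · rw [two_mul_add_sum_Ico_eq _ _ _ _ (by omega), two_mul_add_sum_Ico_eq _ _ _ _ (by omega),
      ← two_mul, hsq]
    omega
  · have hgen : {m : ℕ | ∃ l : ℕ, m = (2 ^ r + 1) * 2 ^ (n + l) + 1}
        ⊆ {y | ∃ c, 1 ≤ c ∧ y = (2 ^ r + 1) * 2 ^ n * c + 1} := by
      rintro _ ⟨l, rfl⟩
      exact ⟨2 ^ l, Nat.one_le_two_pow, by ring⟩
    refine fun hmem ↦ notMem_closure_of_add_eq_mul_add_one (T := 2 ^ n) (d := r + j - i)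
      Nat.one_le_two_pow (by omega) ?_ ?_ (AddSubmonoid.closure_mono hgen hmem)
    · rw [add_one_mul]; omega
    · rw [hsq]; omega

theorem difference_not_mem (n r i j : ℕ) (hn : 2 < n) (hr : 1 ≤ r) (hrn : r + 1 ≤ n)
    (hi1 : 1 ≤ i) (hi2 : i ≤ r) (hj1 : 1 ≤ j) (hj2 : j ≤ n - 2) :
    (2 * ((2 ^ r + 1) * 2 ^ (n + j) + 1)
        + (∑ t ∈ Finset.Ico (j + 1) n, ((2 ^ r + 1) * 2 ^ (n + t) + 1))
        + ((2 ^ r + 1) * 2 ^ (n + (n + r)) + 1))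
      - (2 * ((2 ^ r + 1) * 2 ^ (n + i) + 1)
        + (∑ t ∈ Finset.Ico (i + 1) (n + r), ((2 ^ r + 1) * 2 ^ (n + t) + 1)))
      = (2 ^ r + 1) * 2 ^ (2 * n) + 1 + i - (r + j) ∧
    (2 ^ r + 1) * 2 ^ (2 * n) + 1 + i - (r + j) ∉
      AddSubmonoid.closure {m : ℕ | ∃ l : ℕ, m = (2 ^ r + 1) * 2 ^ (n + l) + 1} :=
  difference_not_mem_general n r i j hi2 hj1 hj2
end

section
/- Let n > 2, k = 2^r + 1 with r ≥ 1 and r + 1 ≤ n. The Proth numerical semigroup P_k(n) satisfies Wilf's inequality: F(P_k(n)) + 1 ≤ e(P_k(n)) · ν(P_k(n)), where ν(P_k(n)) = |{s ∈ P_k(n) : s ≤ F(P_k(n))}|, e denotes the embedding dimension (= n + r + 1), and F denotes the Frobenius number. -/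
/-- binary digit sum -/
private def sb : ℕ → ℕ
  | 0 => 0
  | (a+1) => sb ((a+1)/2) + (a+1) % 2
decreasing_by omega

private lemma sb_le (a : ℕ) : sb a ≤ a := by
  induction a using Nat.strong_induction_on with
  | _ a ih =>
    match a with
    | 0 => simp [sb]
    | (b+1) =>
      have h := ih ((b+1)/2) (by omega)
      simp only [sb]
      omega

private lemma sb_lt_pow : ∀ (j a : ℕ), a < 2 ^ j → sb a ≤ j
  | _, 0, _ => by simp [sb]
  | 0, (a+1), h => by simp at h
  | (j+1), (a+1), h => by
    have h2 : (a+1)/2 < 2 ^ j := by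
      have : 2 ^ (j+1) = 2 * 2 ^ j := by ring
      omega
    have := sb_lt_pow j ((a+1)/2) h2
    simp only [sb]
    omega

private lemma Q_base (a : ℕ) :
    ∃ l : Multiset ℕ, Multiset.card l = sb a ∧ (l.map (2 ^ ·)).sum = a := by
  induction a using Nat.strong_induction_on with
  | _ a ih =>
    match a with
    | 0 => exact ⟨0, by simp [sb], by simp⟩
    | (b+1) =>
      obtain ⟨l, hc, hs⟩ := ih ((b+1)/2) (by omega)
      refine ⟨l.map (· + 1) + Multiset.replicate ((b+1) % 2) 0, ?_, ?_⟩
      · simp only [Multiset.card_add, Multiset.card_map, Multiset.card_replicate, hc, sb]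
      · rw [Multiset.map_add, Multiset.sum_add, Multiset.map_map]
        have h1 : (l.map ((2 ^ ·) ∘ (· + 1))).sum = 2 * (l.map (2 ^ ·)).sum := by
          rw [← Multiset.sum_map_mul_left]
          apply congrArg
          apply Multiset.map_congr rfl
          intro e _
          simp [Function.comp, pow_succ]
          ring
        rw [h1, hs]
        have h2 : ((Multiset.replicate ((b+1) % 2) 0).map (2 ^ ·)).sum = (b+1) % 2 := by
          rw [Multiset.map_replicate, Multiset.sum_replicate]
          simp
        rw [h2]
        omega

private lemma Q_step (a t : ℕ)
    (h : ∃ l : Multiset ℕ, Multiset.card l = t ∧ (l.map (2 ^ ·)).sum = a)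
    (hlt : t < a) :
    ∃ l : Multiset ℕ, Multiset.card l = t + 1 ∧ (l.map (2 ^ ·)).sum = a := by
  obtain ⟨l, hc, hs⟩ := h
  have hex : ∃ e ∈ l, e ≠ 0 := by
    by_contra h0
    push_neg at h0
    have hmap : l.map (2 ^ ·) = l.map (fun _ => 1) :=
      Multiset.map_congr rfl (fun e he => by rw [h0 e he]; rfl)
    rw [hmap, Multiset.map_const', Multiset.sum_replicate, smul_eq_mul, mul_one] at hs
    omega
  obtain ⟨e, hel, he0⟩ := hex
  have hl : l = e ::ₘ l.erase e := (Multiset.cons_erase hel).symm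
  have hcard : Multiset.card (l.erase e) = t - 1 := by
    rw [Multiset.card_erase_of_mem hel, hc]
    rfl
  have ht1 : 1 ≤ t := by
    rw [← hc]
    rw [hl]
    simp
  refine ⟨(e-1) ::ₘ (e-1) ::ₘ l.erase e, ?_, ?_⟩
  · simp [hcard]
    omega
  · have hsum : 2 ^ e + ((l.erase e).map (2 ^ ·)).sum = a := by
      rw [hl] at hs
      simpa using hs
    have h2 : 2 ^ (e-1) + 2 ^ (e-1) = 2 ^ e := by
      have he : e - 1 + 1 = e := by omega
      have hp := pow_succ 2 (e-1)
      rw [he] at hp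
      omega
    simp only [Multiset.map_cons, Multiset.sum_cons]
    omega

private lemma Q_of (a t : ℕ) (h1 : sb a ≤ t) (h2 : t ≤ a) :
    ∃ l : Multiset ℕ, Multiset.card l = t ∧ (l.map (2 ^ ·)).sum = a := by
  induction t, h1 using Nat.le_induction with
  | base => exact Q_base a
  | succ t ht ih => exact Q_step a t (ih (by omega)) (by omega)

private lemma memS_multiset (K : ℕ) (l : Multiset ℕ) :
    K * (l.map (2 ^ ·)).sum + Multiset.card l ∈
      AddSubmonoid.closure {m : ℕ | ∃ i : ℕ, m = K * 2 ^ i + 1} := by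
  induction l using Multiset.induction_on with
  | empty => simpa using (AddSubmonoid.closure {m : ℕ | ∃ i : ℕ, m = K * 2 ^ i + 1}).zero_mem
  | cons e l ih =>
    have hg : K * 2 ^ e + 1 ∈ AddSubmonoid.closure {m : ℕ | ∃ i : ℕ, m = K * 2 ^ i + 1} :=
      AddSubmonoid.subset_closure ⟨e, rfl⟩
    have hadd := AddSubmonoid.add_mem _ hg ih
    have heq : K * 2 ^ e + 1 + (K * (l.map (2 ^ ·)).sum + Multiset.card l)
        = K * ((e ::ₘ l).map (2 ^ ·)).sum + Multiset.card (e ::ₘ l) := by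
      simp only [Multiset.map_cons, Multiset.sum_cons, Multiset.card_cons]
      ring
    rwa [heq] at hadd

private lemma mem_S (K a t : ℕ) (h1 : sb a ≤ t) (h2 : t ≤ a) :
    K * a + t ∈ AddSubmonoid.closure {m : ℕ | ∃ i : ℕ, m = K * 2 ^ i + 1} := by
  obtain ⟨l, hc, hs⟩ := Q_of a t h1 h2
  have := memS_multiset K l
  rwa [hc, hs] at this

private lemma memS_inv (K m : ℕ)
    (h : m ∈ AddSubmonoid.closure {m : ℕ | ∃ i : ℕ, m = K * 2 ^ i + 1}) :
    ∃ a t : ℕ, m = K * a + t ∧ t ≤ a ∧ (t = 0 → a = 0) := by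
  refine AddSubmonoid.closure_induction ?_ ?_ ?_ h
  · rintro x ⟨i, rfl⟩
    exact ⟨2 ^ i, 1, rfl, Nat.one_le_two_pow, by omega⟩
  · exact ⟨0, 0, by simp, le_rfl, fun _ => rfl⟩
  · rintro x y _ _ ⟨a1, t1, rfl, h1, h01⟩ ⟨a2, t2, rfl, h2, h02⟩
    exact ⟨a1 + a2, t1 + t2, by ring, by omega, by omega⟩

private lemma divmod_inj {K a b a' b' : ℕ} (hb : b < K) (hb' : b' < K)
    (h : K * a + b = K * a' + b') : a = a' ∧ b = b' := by
  have hK : 0 < K := by omega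
  have h1 : (K * a + b) / K = a := by
    rw [Nat.mul_add_div hK, Nat.div_eq_of_lt hb, add_zero]
  have h2 : (K * a' + b') / K = a' := by
    rw [Nat.mul_add_div hK, Nat.div_eq_of_lt hb', add_zero]
  have haa : a = a' := by rw [← h1, ← h2, h]
  subst haa
  omega

private lemma four_mul_le : ∀ d : ℕ, 4 ≤ d → 4 * d ≤ 2 ^ d := by
  intro d hd
  induction d, hd using Nat.le_induction with
  | base => norm_num
  | succ d hd ih =>
    have : (4:ℕ) ≤ 2 ^ d := le_trans (by omega) ih
    rw [pow_succ]
    omega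

theorem proth_wilf (n r : ℕ) (hn : 2 < n) (hr : 1 ≤ r) (hrn : r + 1 ≤ n)
    (F : ℕ)
    (hF : IsGreatest {m : ℕ | m ∉ AddSubmonoid.closure
        {m : ℕ | ∃ i : ℕ, m = (2 ^ r + 1) * 2 ^ (n + i) + 1}} F) :
    F + 1 ≤ (n + r + 1) *
      Nat.card {s : ℕ | s ∈ AddSubmonoid.closure
        {m : ℕ | ∃ i : ℕ, m = (2 ^ r + 1) * 2 ^ (n + i) + 1} ∧ s ≤ F} := by
  set d := n + r with hd
  set K := 2 ^ (n + r) + 2 ^ n with hK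
  have hsets : {m : ℕ | ∃ i : ℕ, m = (2 ^ r + 1) * 2 ^ (n + i) + 1}
      = {m : ℕ | ∃ i : ℕ, m = K * 2 ^ i + 1} := by
    ext x
    constructor
    · rintro ⟨i, rfl⟩
      exact ⟨i, by rw [hK]; simp only [pow_add]; ring⟩
    · rintro ⟨i, rfl⟩
      exact ⟨i, by rw [hK]; simp only [pow_add]; ring⟩
  rw [hsets] at hF ⊢
  -- numeric facts
  have hd4 : 4 ≤ d := by omega
  have hp4 : 4 * d ≤ 2 ^ d := four_mul_le d hd4
  have hun : 2 * 2 ^ n ≤ 2 ^ d := by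
    have h1 : 2 ^ (n+1) ≤ 2 ^ d := Nat.pow_le_pow_right (by norm_num) (by omega)
    rw [pow_succ] at h1
    omega
  have hu8 : 8 ≤ 2 ^ n := by
    calc (8:ℕ) = 2 ^ 3 := by norm_num
    _ ≤ 2 ^ n := Nat.pow_le_pow_right (by norm_num) (by omega)
  have hp16 : 16 ≤ 2 ^ d := by
    calc (16:ℕ) = 2 ^ 4 := by norm_num
    _ ≤ 2 ^ d := Nat.pow_le_pow_right (by norm_num) (by omega)
  have h2p : 2 ^ (d+1) = 2 * 2 ^ d := by ring
  have h4p : 2 ^ (d+2) = 4 * 2 ^ d := by ring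
  have hKd : K = 2 ^ d + 2 ^ n := by rw [hK, hd]
  clear_value d K
  have hK0 : 0 < K := by omega
  -- K*K is a gap
  have hgap : K * K ∉ AddSubmonoid.closure {m : ℕ | ∃ i : ℕ, m = K * 2 ^ i + 1} := by
    intro h
    obtain ⟨a, t, heq, hta, ht0⟩ := memS_inv K _ h
    rcases le_or_gt K a with h1 | h1
    · have h2 : K * K ≤ K * a := Nat.mul_le_mul le_rfl h1
      have ht : t = 0 := by omega
      have ha : a = 0 := ht0 ht
      subst ht; subst ha
      have hpos : 0 < K * K := Nat.mul_pos hK0 hK0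
      omega
    · have h2 : K * (a+1) ≤ K * K := Nat.mul_le_mul le_rfl (by omega)
      rw [mul_add, mul_one] at h2
      omega
  have hFk : K * K ≤ F := hF.2 hgap
  -- everything above K*(K+d)+d is in S
  have hcov : ∀ m : ℕ, K * (K + d) + d < m →
      m ∈ AddSubmonoid.closure {m : ℕ | ∃ i : ℕ, m = K * 2 ^ i + 1} := by
    intro m
    induction m using Nat.strong_induction_on with
    | _ m ih =>
      intro hm
      have hB1 : K + 1 ≤ K * (K + d) + d := by
        have : K ≤ K * (K + d) := Nat.le_mul_of_pos_right K (by omega)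
        omega
      rcases le_or_gt m (2 * (K * (K + d) + d)) with hm2 | hm2
      · -- direct construction
        obtain ⟨q, ρ, hdm, hρ⟩ : ∃ q ρ, m = K * q + ρ ∧ ρ < K :=
          ⟨m / K, m % K, (Nat.div_add_mod m K).symm, Nat.mod_lt _ hK0⟩
        have hq1 : K + d ≤ q := by
          by_contra h
          push_neg at h
          have h2 : K * (q + 1) ≤ K * (K + d) := Nat.mul_le_mul le_rfl (by omega)
          rw [mul_add, mul_one] at h2
          omega
        have hq2 : q ≤ 2 * K + 2 * d := by
          by_contra h
          push_neg at h
          have h2 : K * (2 * K + 2 * d + 1) ≤ K * q := Nat.mul_le_mul le_rfl (by omega)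
          have h3 : K * (2 * K + 2 * d + 1) = 2 * (K * (K + d)) + K := by ring
          omega
        have hq4 : q < 2 ^ (d + 2) := by omega
        rcases le_or_gt (sb q) ρ with hc | hc
        · have hmem := mem_S K q ρ hc (by omega)
          rwa [← hdm] at hmem
        · have hsq : sb q ≤ d + 2 := sb_lt_pow (d+2) q hq4
          have hρd : ρ ≤ d + 1 := by omega
          have hq5 : K + ρ + 1 ≤ q := by
            rcases lt_or_ge q (2 ^ (d+1)) with h5 | h5
            · have hsq1 : sb q ≤ d + 1 := sb_lt_pow (d+1) q h5
              have hρd' : ρ ≤ d := by omega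
              rcases eq_or_lt_of_le hq1 with he | hlt'
              · exfalso
                rw [← he] at hdm
                omega
              · omega
            · omega
          have hsq2 : sb (q - 1) ≤ d + 2 := sb_lt_pow (d+2) (q-1) (by omega)
          have hmem := mem_S K (q - 1) (ρ + K) (by omega) (by omega)
          have hm' : m = K * (q - 1) + (ρ + K) := by
            have hq0 : q - 1 + 1 = q := by omega
            have : K * (q - 1) + K = K * q := by
              calc K * (q - 1) + K = K * ((q - 1) + 1) := by ring
              _ = K * q := by rw [hq0]
            omega
          rwa [← hm'] at hmem
      · -- recurse
        have h1 := ih (m - (K + 1)) (by omega) (by omega)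
        have hg : K + 1 ∈ AddSubmonoid.closure {m : ℕ | ∃ i : ℕ, m = K * 2 ^ i + 1} :=
          AddSubmonoid.subset_closure ⟨0, by simp⟩
        have hadd := AddSubmonoid.add_mem _ h1 hg
        rwa [Nat.sub_add_cancel (by omega)] at hadd
  have hFB : F ≤ K * (K + d) + d := by
    by_contra h
    exact hF.1 (hcov F (by omega))
  -- counting
  set M := K - d - 1 with hM
  have hM3 : 3 * d + 3 ≤ M := by omega
  set T := (Finset.range M).sigma (fun i => Finset.range (i+1)) with hT
  set f : (_ : ℕ) × ℕ → ℕ := fun p => K * (d + 1 + p.1) + (d + 1 + p.2) with hf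
  have hTcard2 : T.card * 2 = M * (M + 1) := by
    rw [hT, Finset.card_sigma]
    simp only [Finset.card_range]
    have h1 : ∑ i ∈ Finset.range (M+1), i = ∑ i ∈ Finset.range M, (i + 1) := by
      rw [Finset.sum_range_succ', add_zero]
    rw [← h1, Finset.sum_range_id_mul_two]
    simp [mul_comm]
  have hmem : ∀ a b : ℕ, (⟨a, b⟩ : (_ : ℕ) × ℕ) ∈ T → a < M ∧ b < a + 1 := by
    intro a b hp
    rw [hT, Finset.mem_sigma] at hp
    simpa using hp
  have hinj : Set.InjOn f ↑T := by
    rintro ⟨i, j⟩ hp ⟨i', j'⟩ hp' he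
    obtain ⟨hi, hj⟩ := hmem i j (Finset.mem_coe.mp hp)
    obtain ⟨hi', hj'⟩ := hmem i' j' (Finset.mem_coe.mp hp')
    have hb : d + 1 + j < K := by omega
    have hb' : d + 1 + j' < K := by omega
    have he' : K * (d + 1 + i) + (d + 1 + j) = K * (d + 1 + i') + (d + 1 + j') := he
    obtain ⟨h1, h2⟩ := divmod_inj hb hb' he' 
    have : i = i' := by omega
    subst this
    have : j = j' := by omega
    subst this
    rfl
  set V := T.image f with hV
  have hVcard : V.card = T.card := Finset.card_image_of_injOn hinj
  have hVsub : ↑V ⊆ {s : ℕ | s ∈ AddSubmonoid.closure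
      {m : ℕ | ∃ i : ℕ, m = K * 2 ^ i + 1} ∧ s ≤ F} := by
    intro v hv
    rw [hV] at hv
    simp only [Finset.coe_image, Set.mem_image, Finset.mem_coe] at hv
    obtain ⟨⟨i, j⟩, hp, rfl⟩ := hv
    obtain ⟨hi, hj⟩ := hmem i j hp
    have hfeq : f ⟨i, j⟩ = K * (d + 1 + i) + (d + 1 + j) := rfl
    rw [hfeq]
    constructor
    · apply mem_S
      · have hlt : d + 1 + i < 2 ^ (d+1) := by omega
        have := sb_lt_pow (d+1) (d + 1 + i) hlt
        omega
      · omega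
    · have h1 : d + 1 + i ≤ K - 1 := by omega
      have h2 : K * (d + 1 + i) ≤ K * (K - 1) := Nat.mul_le_mul le_rfl h1
      have h3 : K * (K - 1) + K = K * K := by
        have hq0 : K - 1 + 1 = K := by omega
        calc K * (K - 1) + K = K * ((K - 1) + 1) := by ring
        _ = K * K := by rw [hq0]
      omega
  have hfin : {s : ℕ | s ∈ AddSubmonoid.closure
      {m : ℕ | ∃ i : ℕ, m = K * 2 ^ i + 1} ∧ s ≤ F}.Finite :=
    (Set.finite_Iic F).subset (fun s hs => hs.2)
  have hcard : V.card ≤ Nat.card {s : ℕ | s ∈ AddSubmonoid.closure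
      {m : ℕ | ∃ i : ℕ, m = K * 2 ^ i + 1} ∧ s ≤ F} := by
    rw [Nat.card_coe_set_eq]
    calc V.card = (↑V : Set ℕ).ncard := (Set.ncard_coe_finset V).symm
    _ ≤ _ := Set.ncard_le_ncard hVsub hfin
  -- final arithmetic
  have hkey : 2 * (K * (K + d) + d + 1) ≤ (d + 1) * (M * (M + 1)) := by
    have hKM : K = M + d + 1 := by omega
    rw [hKM]
    nlinarith [hM3, hd4, mul_le_mul_of_nonneg_right hM3 (Nat.zero_le M)]
  have hfin2 : (d + 1) * (M * (M + 1)) = 2 * ((d + 1) * V.card) := by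
    rw [hVcard, ← hTcard2]
    ring
  have hstep : K * (K + d) + d + 1 ≤ (d + 1) * V.card := by omega
  calc F + 1 ≤ K * (K + d) + d + 1 := by omega
  _ ≤ (d + 1) * V.card := hstep
  _ ≤ (d + 1) * Nat.card {s : ℕ | s ∈ AddSubmonoid.closure
      {m : ℕ | ∃ i : ℕ, m = K * 2 ^ i + 1} ∧ s ≤ F} := Nat.mul_le_mul le_rfl hcard
end
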